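/- arXiv:2602.18927 — 6 statements merged into one kernel-verified Lean document; each statement's English description precedes it below -/
import Mathlib

section
/- Let 0 < R < P be real constants and let φ : [0,∞) → [0,∞) be an increasing, non-constant, convex function. Define F₁(t) = (1/(P−R)) ∫_{tR}^{tP} exp(−φ(y)) dy for t > 0. Then limsup_{t→∞} ln F₁(t) / φ(R·t) = −1. Moreover, for every α > 1 the set {t ∈ [0,∞) : ln F₁(t)/φ(R·t) ≤ −α} has finite Lebesgue measure. -/
open MeasureTheory Filter Set

section Aux

variable {φ : ℝ → ℝ}

private lemma expNegAnti (hφmono : MonotoneOn φ (Ici 0)) :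
    AntitoneOn (fun y => Real.exp (-φ y)) (Ici 0) :=
  fun _ hx _ hy hxy => Real.exp_le_exp.2 (neg_le_neg (hφmono hx hy hxy))

private lemma expNegInt (hφmono : MonotoneOn φ (Ici 0)) {u v : ℝ} (hu : 0 ≤ u) (hv : 0 ≤ v) :
    IntervalIntegrable (fun y => Real.exp (-φ y)) volume u v := by
  apply AntitoneOn.intervalIntegrable
  apply (expNegAnti hφmono).mono
  intro x hx
  rcases le_total u v with h | h
  · rw [uIcc_of_le h] at hx; exact le_trans hu hx.1
  · rw [uIcc_of_ge h] at hx; exact le_trans hv hx.1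

private lemma ilower (hφmono : MonotoneOn φ (Ici 0)) {u v w : ℝ} (hu : 0 ≤ u) (huv : u ≤ v)
    (hvw : v ≤ w) :
    (v - u) * Real.exp (-φ v) ≤ ∫ y in u..w, Real.exp (-φ y) := by
  have hv : (0:ℝ) ≤ v := le_trans hu huv
  have h1 := expNegInt hφmono hu hv
  have h2 := expNegInt hφmono hv (le_trans hv hvw)
  have key : (v - u) * Real.exp (-φ v) ≤ ∫ y in u..v, Real.exp (-φ y) := by
    have := intervalIntegral.integral_mono_on (μ := volume) huv
      (intervalIntegrable_const (c := Real.exp (-φ v))) h1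
      (fun x hx => Real.exp_le_exp.2 (neg_le_neg (hφmono (le_trans hu hx.1) hv hx.2)))
    simpa using this
  have hnn : (0:ℝ) ≤ ∫ y in v..w, Real.exp (-φ y) :=
    intervalIntegral.integral_nonneg hvw (fun x _ => (Real.exp_pos _).le)
  have hadd := intervalIntegral.integral_add_adjacent_intervals h1 h2
  linarith [hadd]

private lemma iupper (hφmono : MonotoneOn φ (Ici 0)) {u w : ℝ} (hu : 0 ≤ u) (huw : u ≤ w) :
    (∫ y in u..w, Real.exp (-φ y)) ≤ (w - u) * Real.exp (-φ u) := by
  have := intervalIntegral.integral_mono_on (μ := volume) huw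
    (expNegInt hφmono hu (le_trans hu huw))
    (intervalIntegrable_const (c := Real.exp (-φ u)))
    (fun x hx => Real.exp_le_exp.2 (neg_le_neg (hφmono hu (le_trans hu hx.1) hx.1)))
  simpa using this

private lemma growthLemma (hφmono : MonotoneOn φ (Ici 0))
    (hφconv : ConvexOn ℝ (Ici 0) φ)
    (hφnonneg : ∀ x ∈ Ici (0:ℝ), 0 ≤ φ x)
    (hφnonconst : ∃ a ∈ Ici (0:ℝ), ∃ b ∈ Ici (0:ℝ), φ a ≠ φ b) :
    ∃ s > (0:ℝ), ∃ b ≥ (0:ℝ), ∀ x, b ≤ x → s * x - s * b ≤ φ x := by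
  obtain ⟨a, ha, b, hb, hne⟩ := hφnonconst
  obtain ⟨a, b, ha, hb, hab, hlt⟩ : ∃ a b : ℝ, a ∈ Ici 0 ∧ b ∈ Ici 0 ∧ a < b ∧ φ a < φ b := by
    rcases lt_trichotomy a b with h | h | h
    · exact ⟨a, b, ha, hb, h, lt_of_le_of_ne (hφmono ha hb h.le) hne⟩
    · exact absurd (by rw [h]) hne
    · exact ⟨b, a, hb, ha, h, lt_of_le_of_ne (hφmono hb ha h.le) (Ne.symm hne)⟩
  set s := (φ b - φ a) / (b - a) with hs
  have hspos : 0 < s := div_pos (sub_pos.2 hlt) (sub_pos.2 hab)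
  refine ⟨s, hspos, b, hb, fun x hx => ?_⟩
  have hx0 : x ∈ Ici (0:ℝ) := le_trans hb hx
  rcases eq_or_lt_of_le hx with rfl | hbx
  · have := hφnonneg b hb; nlinarith
  · have hsl := hφconv.slope_mono_adjacent ha hx0 hab hbx
    rw [← hs] at hsl
    have h1 : s * (x - b) ≤ φ x - φ b :=
      (le_div_iff₀ (by linarith)).1 hsl
    have := hφnonneg b hb
    nlinarith

set_option maxHeartbeats 2000000 in
private lemma badMeasure {R P : ℝ} (hR : 0 < R) (hRP : R < P)
    (hφmono : MonotoneOn φ (Ici 0))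
    (hgrow : ∃ s > (0:ℝ), ∃ b ≥ (0:ℝ), ∀ x, b ≤ x → s * x - s * b ≤ φ x)
    {F₁ : ℝ → ℝ}
    (hF₁ : ∀ t : ℝ, 0 < t →
      F₁ t = (1 / (P - R)) * ∫ y in (t * R)..(t * P), Real.exp (-φ y))
    {α : ℝ} (hα : 1 < α) :
    volume {t : ℝ | 0 ≤ t ∧ Real.log (F₁ t) / φ (R * t) ≤ -α} < ⊤ := by
  obtain ⟨s, hs, b₀, hb₀, hgr⟩ := hgrow
  have hPR : (0:ℝ) < P - R := by linarith
  set β : ℝ := α - 1 with hβdef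
  have hβ : 0 < β := by simp [hβdef]; linarith
  set C₀ : ℝ := Real.log (P - R) with hC₀
  obtain ⟨k₁, hk₁ge, hk₁one⟩ : ∃ n : ℕ, (2 + C₀) / β ≤ (n : ℝ) ∧ (1:ℝ) ≤ (n : ℝ) := by
    obtain ⟨m, hm⟩ := exists_nat_ge ((2 + C₀) / β)
    exact ⟨m + 1, by push_cast; linarith, by push_cast; linarith⟩
  set T : ℝ := max (max 1 (1 / (P - R))) (((k₁:ℝ) + s * b₀) / (s * R)) with hT
  have hT1 : (1:ℝ) ≤ T := le_trans (le_max_left _ _) (le_max_left _ _)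
  have hTPR : 1 ≤ T * (P - R) := by
    have h1 : 1 / (P - R) ≤ T := le_trans (le_max_right _ _) (le_max_left _ _)
    rw [div_le_iff₀ hPR] at h1
    linarith
  have hgT : ∀ t : ℝ, T ≤ t → (k₁ : ℝ) ≤ φ (R * t) := by
    intro t ht
    have h2 : ((k₁:ℝ) + s * b₀) / (s * R) ≤ t := le_trans (le_max_right _ _) ht
    rw [div_le_iff₀ (by positivity)] at h2
    have hb : b₀ ≤ R * t := by nlinarith [hk₁one]
    have := hgr (R * t) hb
    nlinarith
  have star : ∀ t : ℝ, T ≤ t → Real.log (F₁ t) / φ (R * t) ≤ -α →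
      ∀ δ : ℝ, 0 < δ → δ ≤ 1 →
      α * φ (R * t) + Real.log δ - C₀ ≤ φ (t * R + δ) := by
    intro t ht hbad δ hδ hδ1
    have ht0 : 0 < t := lt_of_lt_of_le one_pos (le_trans hT1 ht)
    have hgpos : 0 < φ (R * t) := lt_of_lt_of_le one_pos (le_trans hk₁one (hgT t ht))
    have htR : 0 ≤ t * R := by positivity
    have hvle : t * R + δ ≤ t * P := by nlinarith [hTPR, (le_trans hT1 ht)]
    have hF := hF₁ t ht0
    have hlog : Real.log (F₁ t) ≤ -α * φ (R * t) := by
      rw [div_le_iff₀ hgpos] at hbad; linarith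
    have hlow : δ / (P - R) * Real.exp (-φ (t * R + δ)) ≤ F₁ t := by
      have := ilower hφmono htR (by linarith : t * R ≤ t * R + δ) hvle
      rw [hF]
      calc δ / (P - R) * Real.exp (-φ (t * R + δ))
          = 1 / (P - R) * ((t * R + δ - t * R) * Real.exp (-φ (t * R + δ))) := by ring
        _ ≤ 1 / (P - R) * ∫ y in (t * R)..(t * P), Real.exp (-φ y) := by
            apply mul_le_mul_of_nonneg_left this (by positivity)
    have hFpos : 0 < F₁ t := lt_of_lt_of_le (by positivity) hlow
    have hFle : F₁ t ≤ Real.exp (-α * φ (R * t)) := by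
      calc F₁ t = Real.exp (Real.log (F₁ t)) := (Real.exp_log hFpos).symm
        _ ≤ _ := Real.exp_le_exp.2 hlog
    have hcomb : δ * Real.exp (-φ (t * R + δ)) ≤ (P - R) * Real.exp (-α * φ (R * t)) := by
      have := le_trans hlow hFle
      rw [div_mul_eq_mul_div, div_le_iff₀ hPR] at this
      nlinarith [Real.exp_pos (-α * φ (R * t))]
    have hl := Real.log_le_log (by positivity) hcomb
    rw [Real.log_mul (ne_of_gt hδ) (ne_of_gt (Real.exp_pos _)),
        Real.log_mul (ne_of_gt hPR) (ne_of_gt (Real.exp_pos _)),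
        Real.log_exp, Real.log_exp] at hl
    rw [← hC₀] at hl
    linarith
  set S : ℕ → Set ℝ := fun j =>
    {t : ℝ | T ≤ t ∧ Real.log (F₁ t) / φ (R * t) ≤ -α ∧
      ((k₁ + j : ℕ) : ℝ) ≤ φ (R * t) ∧ φ (R * t) < ((k₁ + j : ℕ) : ℝ) + 1} with hS
  set r : ℕ → ℝ := fun j => Real.exp (1 + C₀ - β * ((k₁ + j : ℕ) : ℝ)) / R with hr
  have hrpos : ∀ j, 0 < r j := fun j => by positivity
  have key : ∀ j : ℕ, ∀ t ∈ S j, ∀ t' ∈ S j, t ≤ t' → t' - t ≤ r j := by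
    intro j t ht t' ht' htt'
    obtain ⟨hTt, hbad, hk_le, hk_lt⟩ := ht
    obtain ⟨hTt', hbad', hk_le', hk_lt'⟩ := ht'
    set k : ℝ := ((k₁ + j : ℕ) : ℝ) with hk
    have hkk₁ : (k₁ : ℝ) ≤ k := by rw [hk]; push_cast; linarith
    by_contra hcon
    push_neg at hcon
    have hΔpos : 0 < t' - t := lt_trans (hrpos j) hcon
    rcases le_or_gt (R * (t' - t)) 1 with hc | hc
    · have hst := star t hTt hbad (R * (t' - t)) (by positivity) hc
      have heq : t * R + R * (t' - t) = R * t' := by ring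
      rw [heq] at hst
      have h1 : Real.log (R * (t' - t)) < k + 1 - α * k + C₀ := by nlinarith
      have h2 : R * (t' - t) < Real.exp (k + 1 - α * k + C₀) := by
        calc R * (t' - t) = Real.exp (Real.log (R * (t' - t))) :=
              (Real.exp_log (by positivity)).symm
          _ < _ := Real.exp_lt_exp.2 h1
      have heq2 : k + 1 - α * k + C₀ = 1 + C₀ - β * k := by rw [hβdef]; ring
      rw [heq2] at h2
      have : t' - t < r j := by
        rw [hr]
        rw [lt_div_iff₀ hR]
        linarith [h2]
      linarith
    · have hst := star t hTt hbad 1 one_pos le_rfl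
      rw [Real.log_one] at hst
      have ht1 : (1:ℝ) ≤ t := le_trans hT1 hTt
      have ht1' : (1:ℝ) ≤ t' := le_trans hT1 hTt'
      have htR0 : (0:ℝ) ≤ t * R + 1 := by nlinarith
      have htR0' : (0:ℝ) ≤ R * t' := by nlinarith
      have hle12 : t * R + 1 ≤ R * t' := by nlinarith
      have hmono : φ (t * R + 1) ≤ φ (R * t') :=
        hφmono (mem_Ici.2 htR0) (mem_Ici.2 htR0') hle12
      have hα0 : (0:ℝ) < α := by linarith
      have h3 : α * k ≤ α * φ (R * t) := mul_le_mul_of_nonneg_left hk_le hα0.le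
      have h4 : α * k < k + 1 + C₀ := by linarith
      have h5 : β * k < 1 + C₀ := by
        have hβk : β * k = α * k - k := by rw [hβdef]; ring
        linarith
      have h6 : 2 + C₀ ≤ β * k := by
        have h := (div_le_iff₀ hβ).1 (le_trans hk₁ge hkk₁)
        linarith
      linarith
  have hcover : {t : ℝ | 0 ≤ t ∧ Real.log (F₁ t) / φ (R * t) ≤ -α} ⊆
      Icc 0 T ∪ ⋃ j : ℕ, S j := by
    intro t ⟨ht0, hbad⟩
    rcases le_or_gt t T with h | h
    · exact Or.inl ⟨ht0, h⟩
    · right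
      have hTt : T ≤ t := h.le
      have hg := hgT t hTt
      have hg0 : (0:ℝ) ≤ φ (R * t) := le_trans (by positivity) hg
      set k : ℕ := ⌊φ (R * t)⌋₊ with hkdef
      have hk₁k : k₁ ≤ k := by
        rw [hkdef]
        exact Nat.le_floor hg
      refine mem_iUnion.2 ⟨k - k₁, ?_⟩
      have hkk : k₁ + (k - k₁) = k := by omega
      rw [hS]
      simp only [mem_setOf_eq, hkk]
      exact ⟨hTt, hbad, Nat.floor_le hg0, Nat.lt_floor_add_one _⟩
  have hSj : ∀ j : ℕ, volume (S j) ≤ ENNReal.ofReal (2 * r j) := by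
    intro j
    rcases Set.eq_empty_or_nonempty (S j) with he | ⟨t₀, ht₀⟩
    · simp [he]
    · have hsub : S j ⊆ Icc (t₀ - r j) (t₀ + r j) := by
        intro t ht
        constructor
        · rcases le_total t t₀ with h | h
          · have := key j t ht t₀ ht₀ h; linarith
          · have := hrpos j; linarith
        · rcases le_total t t₀ with h | h
          · have := hrpos j; linarith
          · have := key j t₀ ht₀ t ht h; linarith
      calc volume (S j) ≤ volume (Icc (t₀ - r j) (t₀ + r j)) := measure_mono hsub
        _ = ENNReal.ofReal (2 * r j) := by rw [Real.volume_Icc]; ring_nf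
  have hsum : (∑' j : ℕ, ENNReal.ofReal (2 * r j)) < ⊤ := by
    have hrj : ∀ j : ℕ, 2 * r j =
        (2 * Real.exp (1 + C₀ - β * (k₁:ℝ)) / R) * (Real.exp (-β)) ^ j := by
      intro j
      rw [hr]
      simp only
      rw [← Real.exp_nat_mul]
      have hsplit : Real.exp (1 + C₀ - β * ((k₁ + j : ℕ) : ℝ)) =
          Real.exp (1 + C₀ - β * (k₁:ℝ)) * Real.exp ((j:ℝ) * -β) := by
        rw [← Real.exp_add]
        congr 1
        push_cast
        ring
      rw [hsplit]
      ring
    calc (∑' j : ℕ, ENNReal.ofReal (2 * r j))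
        = ∑' j : ℕ, ENNReal.ofReal (2 * Real.exp (1 + C₀ - β * (k₁:ℝ)) / R) *
            (ENNReal.ofReal (Real.exp (-β))) ^ j := by
          congr 1; funext j
          rw [hrj j, ENNReal.ofReal_mul (by positivity), ENNReal.ofReal_pow (by positivity)]
      _ = ENNReal.ofReal (2 * Real.exp (1 + C₀ - β * (k₁:ℝ)) / R) *
            ∑' j : ℕ, (ENNReal.ofReal (Real.exp (-β))) ^ j := ENNReal.tsum_mul_left
      _ < ⊤ := by
          apply ENNReal.mul_lt_top ENNReal.ofReal_lt_top
          rw [ENNReal.tsum_geometric]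
          apply ENNReal.inv_lt_top.2
          rw [tsub_pos_iff_lt]
          apply ENNReal.ofReal_lt_one.2
          apply Real.exp_lt_one_iff.2
          linarith
  calc volume {t : ℝ | 0 ≤ t ∧ Real.log (F₁ t) / φ (R * t) ≤ -α}
      ≤ volume (Icc 0 T ∪ ⋃ j : ℕ, S j) := measure_mono hcover
    _ ≤ volume (Icc 0 T) + volume (⋃ j : ℕ, S j) := measure_union_le _ _
    _ ≤ volume (Icc 0 T) + ∑' j : ℕ, volume (S j) := by
        gcongr; exact measure_iUnion_le _
    _ ≤ volume (Icc 0 T) + ∑' j : ℕ, ENNReal.ofReal (2 * r j) := by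
        gcongr with j; exact hSj j
    _ < ⊤ := by
        apply ENNReal.add_lt_top.2
        exact ⟨by rw [Real.volume_Icc]; exact ENNReal.ofReal_lt_top, hsum⟩

private lemma upperBound {R P : ℝ} (hR : 0 < R) (hRP : R < P)
    (hφmono : MonotoneOn φ (Ici 0))
    (hgrow : ∃ s > (0:ℝ), ∃ b ≥ (0:ℝ), ∀ x, b ≤ x → s * x - s * b ≤ φ x)
    {F₁ : ℝ → ℝ}
    (hF₁ : ∀ t : ℝ, 0 < t →
      F₁ t = (1 / (P - R)) * ∫ y in (t * R)..(t * P), Real.exp (-φ y))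
    {ε : ℝ} (hε : 0 < ε) :
    ∀ᶠ t in atTop, Real.log (F₁ t) / φ (R * t) ≤ -1 + ε := by
  obtain ⟨s, hs, b₀, hb₀, hgr⟩ := hgrow
  have hPR : (0:ℝ) < P - R := by linarith
  filter_upwards [eventually_ge_atTop (1:ℝ), eventually_ge_atTop (b₀ / R),
    eventually_ge_atTop ((4 / (ε * s * R)) ^ 2), eventually_ge_atTop (2 * b₀ / R)]
    with t ht1 htb htsq htb2
  have ht0 : 0 < t := lt_of_lt_of_le one_pos ht1
  have hbR : b₀ ≤ R * t := by
    rw [div_le_iff₀ hR] at htb; linarith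
  have hb2R : 2 * b₀ ≤ R * t := by
    rw [div_le_iff₀ hR] at htb2; linarith
  have hgrt := hgr (R * t) hbR
  have hghalf : s * R * t / 2 ≤ φ (R * t) := by nlinarith
  have hgpos : 0 < φ (R * t) := lt_of_lt_of_le (by positivity) hghalf
  have hsqrt : 4 / (ε * s * R) ≤ Real.sqrt t := Real.le_sqrt_of_sq_le htsq
  have hlog2 : Real.log t ≤ 2 * Real.sqrt t := by
    have h1 : Real.log (Real.sqrt t) ≤ Real.sqrt t - 1 :=
      Real.log_le_sub_one_of_pos (Real.sqrt_pos.2 ht0)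
    rw [Real.log_sqrt ht0.le] at h1
    linarith
  have hsq2 : 2 * Real.sqrt t ≤ ε * (s * R * t / 2) := by
    have hss : Real.sqrt t * Real.sqrt t = t := Real.mul_self_sqrt ht0.le
    have h4 : 4 ≤ ε * s * R * Real.sqrt t := by
      rw [div_le_iff₀ (by positivity)] at hsqrt; linarith
    have hsqpos : 0 < Real.sqrt t := Real.sqrt_pos.2 ht0
    nlinarith
  have hlogle : Real.log t ≤ ε * φ (R * t) := by
    have : ε * (s * R * t / 2) ≤ ε * φ (R * t) :=
      mul_le_mul_of_nonneg_left hghalf hε.le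
    linarith
  have hF := hF₁ t ht0
  have htR0 : (0:ℝ) ≤ t * R := by positivity
  have hup : F₁ t ≤ t * Real.exp (-φ (R * t)) := by
    rw [hF]
    have h1 := iupper hφmono htR0 (by nlinarith : t * R ≤ t * P)
    calc 1 / (P - R) * ∫ y in (t * R)..(t * P), Real.exp (-φ y)
        ≤ 1 / (P - R) * ((t * P - t * R) * Real.exp (-φ (t * R))) :=
          mul_le_mul_of_nonneg_left h1 (by positivity)
      _ = t * Real.exp (-φ (R * t)) := by rw [mul_comm t R]; field_simp
  have hFpos : 0 < F₁ t := by
    rw [hF]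
    have h1 := ilower hφmono htR0 (by nlinarith : t * R ≤ t * P) (le_refl (t * P))
    have h0 : 0 < (t * P - t * R) * Real.exp (-φ (t * P)) := by
      have : 0 < t * P - t * R := by nlinarith
      positivity
    have h2 : 0 < ∫ y in (t * R)..(t * P), Real.exp (-φ y) := lt_of_lt_of_le h0 h1
    positivity
  have hlogF : Real.log (F₁ t) ≤ Real.log t - φ (R * t) := by
    have := Real.log_le_log hFpos hup
    rwa [Real.log_mul (ne_of_gt ht0) (ne_of_gt (Real.exp_pos _)), Real.log_exp] at this
  rw [div_le_iff₀ hgpos]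
  nlinarith

end Aux

theorem stmt_3 (R P : ℝ) (hR : 0 < R) (hRP : R < P)
    (φ : ℝ → ℝ)
    (hφmono : MonotoneOn φ (Ici 0))
    (hφconv : ConvexOn ℝ (Ici 0) φ)
    (hφnonneg : ∀ x ∈ Ici (0:ℝ), 0 ≤ φ x)
    (hφnonconst : ∃ a ∈ Ici (0:ℝ), ∃ b ∈ Ici (0:ℝ), φ a ≠ φ b)
    (F₁ : ℝ → ℝ)
    (hF₁ : ∀ t : ℝ, 0 < t →
      F₁ t = (1 / (P - R)) * ∫ y in (t * R)..(t * P), Real.exp (-φ y)) :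
    limsup (fun t : ℝ => Real.log (F₁ t) / φ (R * t)) atTop = -1 ∧
    ∀ α : ℝ, 1 < α →
      volume {t : ℝ | 0 ≤ t ∧ Real.log (F₁ t) / φ (R * t) ≤ -α} < ⊤ := by
  have hgrow := growthLemma hφmono hφconv hφnonneg hφnonconst
  have hPart2 : ∀ α : ℝ, 1 < α →
      volume {t : ℝ | 0 ≤ t ∧ Real.log (F₁ t) / φ (R * t) ≤ -α} < ⊤ :=
    fun α hα => badMeasure hR hRP hφmono hgrow hF₁ hα
  have hupper : ∀ ε : ℝ, 0 < ε →
      ∀ᶠ t in atTop, Real.log (F₁ t) / φ (R * t) ≤ -1 + ε :=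
    fun ε hε => upperBound hR hRP hφmono hgrow hF₁ hε
  have hfreq : ∀ α : ℝ, 1 < α →
      ∃ᶠ t in atTop, -α ≤ Real.log (F₁ t) / φ (R * t) := by
    intro α hα
    by_contra h
    rw [not_frequently] at h
    have h' : ∀ᶠ t in atTop, Real.log (F₁ t) / φ (R * t) < -α :=
      h.mono (fun t ht => lt_of_not_ge ht)
    obtain ⟨T', hT'⟩ := eventually_atTop.1 (h'.and (eventually_ge_atTop (0:ℝ)))
    have hsub : Ici T' ⊆ {t : ℝ | 0 ≤ t ∧ Real.log (F₁ t) / φ (R * t) ≤ -α} :=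
      fun t ht => ⟨(hT' t ht).2, (hT' t ht).1.le⟩
    have htop := measure_mono (μ := volume) hsub
    rw [Real.volume_Ici] at htop
    exact lt_irrefl _ (lt_of_le_of_lt htop (hPart2 α hα))
  have hbdd : IsBoundedUnder (· ≤ ·) atTop (fun t : ℝ => Real.log (F₁ t) / φ (R * t)) :=
    ⟨0, eventually_map.2 ((hupper 1 one_pos).mono (fun t ht => by linarith))⟩
  have hcobdd : IsCoboundedUnder (· ≤ ·) atTop
      (fun t : ℝ => Real.log (F₁ t) / φ (R * t)) :=
    IsCoboundedUnder.of_frequently_ge (hfreq 2 (by norm_num))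
  constructor
  · apply le_antisymm
    · apply le_of_forall_pos_le_add
      intro ε hε
      exact limsup_le_of_le hcobdd (hupper ε hε)
    · apply le_of_forall_pos_le_add
      intro ε hε
      have h1 : -(1 + ε) ≤ limsup (fun t : ℝ => Real.log (F₁ t) / φ (R * t)) atTop :=
        le_limsup_of_frequently_le (hfreq (1 + ε) (by linarith)) hbdd
      linarith
  · exact hPart2
end

section
/- Let 0 < R < P be real constants, let φ : [0,∞) → [0,∞) be an increasing, non-constant, convex function, and for each integer m ≥ 1 define F_m(t) = ∫_{tR}^{tP} (y − tR)^{m−1}/(P−R)^m · exp(−φ(y)) dy. Then for every integer i ≥ 2, liminf_{t→∞} ln F_i(t) / ln F_{i−1}(t) = 1. Moreover, for every α > 1 the set {t ∈ [0,∞) : (−ln F_i(t))/(−ln F_{i−1}(t)) > α} has finite Lebesgue measure. -/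
/-!
Write `f_m(t) = -log F_m(t)` and `a = tR`. Since `φ ≥ φ(a)` on `[tR, tP]`,
`F_m(t) ≤ exp(-φ(a)) t^m`, and a convex, increasing, non-constant `φ` grows at least linearly,
so `f_m(t) ≥ φ(a) - m log t` grows linearly in `t`. The extra weight `y - a` is at most
`t(P - R)`, so `F_{m+1} ≤ t F_m`, i.e. `f_{m+1} ≥ f_m - log t`, and the ratio is eventually
`≥ 1 - ε`.

Conversely, restricting the integral to `[a, a + δ]` gives
`f_m(t) ≤ φ(a + δ) + m log (1/δ) + O(1)`. With `δ = exp(-η φ(a))` this is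
`≤ (1 + mη) φ(a) + O(1)` unless `φ` increases by at least `1` on `[a, a + δ]`. The set of such
`a` has finite measure: its part where `φ ∈ [k, k+1)` has diameter at most `exp(-η k)`.
Outside this set the ratio is at most `1 + O(η)`, which gives both claims.
-/

open MeasureTheory Filter Set Real

lemma eventually_mul_log_add_le_mul {A : ℝ} (hA : 0 < A) (B C : ℝ) :
    ∀ᶠ t in atTop, B * log t + C ≤ A * t := by
  have h := ((Real.isLittleO_log_id_atTop.const_mul_left B).add
    (Asymptotics.isLittleO_const_id_atTop C)).def hA
  filter_upwards [h, eventually_ge_atTop 0] with t ht ht0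
  rw [Real.norm_eq_abs, Real.norm_eq_abs, id, abs_of_nonneg ht0] at ht
  exact (le_abs_self _).trans ht

lemma frequently_atTop_notMem_of_volume_lt_top {S : Set ℝ} (hS : volume S < ⊤) :
    ∃ᶠ t in atTop, t ∉ S := by
  rw [frequently_atTop]
  intro a
  by_contra! h
  have hle : volume (Ici a) ≤ volume S := measure_mono fun b hb => h b hb
  rw [Real.volume_Ici] at hle
  exact (hle.trans_lt hS).ne rfl

lemma volume_setOf_lt_top_of_eventually_mem {S : Set ℝ} (hS : volume S < ⊤) {p : ℝ → Prop}
    (h : ∀ᶠ t in atTop, p t → t ∈ S) : volume {t | 0 ≤ t ∧ p t} < ⊤ := by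
  obtain ⟨T, hT⟩ := eventually_atTop.1 h
  have hsub : {t | 0 ≤ t ∧ p t} ⊆ Icc 0 T ∪ S := fun t ⟨ht0, hpt⟩ =>
    (le_or_gt t T).imp (fun htT => ⟨ht0, htT⟩) fun hTt => hT t hTt.le hpt
  exact (measure_mono hsub).trans_lt (measure_union_lt_top measure_Icc_lt_top hS)

lemma liminf_eq_of_forall_eventually_of_forall_frequently {ι : Type*} {l : Filter ι}
    {u : ι → ℝ} {a : ℝ} (hge : ∀ ε > 0, ∀ᶠ x in l, a - ε ≤ u x)
    (hle : ∀ ε > 0, ∃ᶠ x in l, u x ≤ a + ε) : liminf u l = a := by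
  have hbdd : IsBoundedUnder (· ≥ ·) l u := ⟨a - 1, hge 1 one_pos⟩
  have hcobdd : IsCoboundedUnder (· ≥ ·) l u :=
    IsCoboundedUnder.of_frequently_le (hle 1 one_pos)
  exact le_antisymm
    (le_of_forall_pos_le_add fun ε hε => liminf_le_of_frequently_le (hle ε hε) hbdd)
    (le_of_forall_sub_le fun ε hε => le_liminf_of_le hcobdd (hge ε hε))

lemma exists_pos_mul_add_le_of_convexOn {φ : ℝ → ℝ} (hφ : MonotoneOn φ (Ici 0))
    (hconv : ConvexOn ℝ (Ici 0) φ)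
    (hnc : ∃ a ∈ Ici (0:ℝ), ∃ b ∈ Ici (0:ℝ), φ a ≠ φ b) :
    ∃ κ > 0, ∃ c, ∀ x ∈ Ici (0:ℝ), κ * x + c ≤ φ x := by
  obtain ⟨u, w, hu, huw, hlt⟩ : ∃ u w, 0 ≤ u ∧ u < w ∧ φ u < φ w := by
    obtain ⟨a, ha, b, hb, hne⟩ := hnc
    rcases lt_trichotomy a b with h | rfl | h
    · exact ⟨a, b, ha, h, (hφ ha hb h.le).lt_of_ne hne⟩
    · exact absurd rfl hne
    · exact ⟨b, a, hb, h, (hφ hb ha h.le).lt_of_ne hne.symm⟩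
  have hw : w ∈ Ici (0:ℝ) := mem_Ici.2 (hu.trans huw.le)
  set κ := (φ w - φ u) / (w - u)
  have hκ : 0 < κ := div_pos (sub_pos.2 hlt) (sub_pos.2 huw)
  refine ⟨κ, hκ, φ 0 - κ * w, fun x hx => ?_⟩
  have hφ0 : φ 0 ≤ φ x := hφ self_mem_Ici hx hx
  rcases le_or_gt x w with hxw | hwx
  · linarith [mul_le_mul_of_nonneg_left hxw hκ.le]
  · have hslope : κ ≤ (φ x - φ w) / (x - w) := hconv.slope_mono_adjacent hu hx huw hwx
    rw [le_div_iff₀ (sub_pos.2 hwx)] at hslope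
    linarith [hφ self_mem_Ici hw hw]

section IntervalBounds

variable {φ : ℝ → ℝ} {a b : ℝ}

lemma integral_sub_pow (a b : ℝ) (k : ℕ) :
    ∫ y in a..b, (y - a) ^ k = (b - a) ^ (k + 1) / (k + 1) := by
  simp [intervalIntegral.integral_comp_sub_right (fun y => y ^ k) a, integral_pow]

lemma intervalIntegrable_sub_pow_mul_exp_neg (hφ : MonotoneOn φ (Icc a b)) (hab : a ≤ b)
    (k : ℕ) : IntervalIntegrable (fun y => (y - a) ^ k * exp (-φ y)) volume a b := by
  have hexp : AntitoneOn (fun y => exp (-φ y)) (uIcc a b) := by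
    rw [uIcc_of_le hab]
    exact fun x hx y hy hxy => exp_le_exp.2 (neg_le_neg (hφ hx hy hxy))
  exact hexp.intervalIntegrable.continuousOn_mul (by fun_prop)

lemma integral_sub_pow_mul_exp_neg_pos (hφ : MonotoneOn φ (Icc a b)) (hab : a < b) (k : ℕ) :
    0 < ∫ y in a..b, (y - a) ^ k * exp (-φ y) :=
  intervalIntegral.intervalIntegral_pos_of_pos_on
    (intervalIntegrable_sub_pow_mul_exp_neg hφ hab.le k)
    (fun _ hx => mul_pos (pow_pos (sub_pos.2 hx.1) k) (exp_pos _)) hab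

lemma integral_sub_pow_mul_exp_neg_le (hφ : MonotoneOn φ (Icc a b)) (hab : a ≤ b) (k : ℕ) :
    ∫ y in a..b, (y - a) ^ k * exp (-φ y) ≤ exp (-φ a) * ((b - a) ^ (k + 1) / (k + 1)) := by
  rw [← integral_sub_pow, ← intervalIntegral.integral_const_mul]
  refine intervalIntegral.integral_mono_on hab
    (intervalIntegrable_sub_pow_mul_exp_neg hφ hab k)
    ((continuous_const.mul (by fun_prop)).intervalIntegrable _ _) fun x hx => ?_
  rw [mul_comm]
  have : 0 ≤ x - a := sub_nonneg.2 hx.1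
  have hφx : φ a ≤ φ x := hφ (left_mem_Icc.2 hab) hx hx.1
  gcongr

lemma le_integral_sub_pow_mul_exp_neg (hφ : MonotoneOn φ (Icc a b)) {δ : ℝ} (hδ : 0 ≤ δ)
    (hδb : a + δ ≤ b) (k : ℕ) :
    exp (-φ (a + δ)) * (δ ^ (k + 1) / (k + 1)) ≤ ∫ y in a..b, (y - a) ^ k * exp (-φ y) := by
  have ha : a ≤ a + δ := le_add_of_nonneg_right hδ
  calc exp (-φ (a + δ)) * (δ ^ (k + 1) / (k + 1))
      = ∫ y in a..a + δ, exp (-φ (a + δ)) * (y - a) ^ k := by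
        rw [intervalIntegral.integral_const_mul, integral_sub_pow, add_sub_cancel_left]
    _ ≤ ∫ y in a..a + δ, (y - a) ^ k * exp (-φ y) := by
        refine intervalIntegral.integral_mono_on ha
          ((continuous_const.mul (by fun_prop)).intervalIntegrable _ _)
          (intervalIntegrable_sub_pow_mul_exp_neg (hφ.mono (Icc_subset_Icc_right hδb)) ha k)
          fun x hx => ?_
        rw [mul_comm]
        have : 0 ≤ x - a := sub_nonneg.2 hx.1
        have hφx : φ x ≤ φ (a + δ) := hφ ⟨hx.1, hx.2.trans hδb⟩ ⟨ha, hδb⟩ hx.2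
        gcongr
    _ ≤ ∫ y in a..b, (y - a) ^ k * exp (-φ y) :=
        intervalIntegral.integral_mono_interval le_rfl ha hδb
          ((ae_restrict_mem measurableSet_Ioc).mono fun x hx =>
            mul_nonneg (pow_nonneg (sub_nonneg.2 hx.1.le) k) (exp_pos _).le)
          (intervalIntegrable_sub_pow_mul_exp_neg hφ (ha.trans hδb) k)

lemma integral_sub_pow_succ_mul_exp_neg_le (hφ : MonotoneOn φ (Icc a b)) (hab : a ≤ b)
    (k : ℕ) :
    ∫ y in a..b, (y - a) ^ (k + 1) * exp (-φ y)
      ≤ (b - a) * ∫ y in a..b, (y - a) ^ k * exp (-φ y) := by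
  rw [← intervalIntegral.integral_const_mul]
  refine intervalIntegral.integral_mono_on hab
    (intervalIntegrable_sub_pow_mul_exp_neg hφ hab (k + 1))
    ((intervalIntegrable_sub_pow_mul_exp_neg hφ hab k).const_mul _) fun x hx => ?_
  rw [pow_succ, mul_comm _ (x - a), mul_assoc]
  have : 0 ≤ x - a := sub_nonneg.2 hx.1
  gcongr
  exact hx.2

end IntervalBounds

-- `F_m(t)` of the statement.
noncomputable def truncatedMoment (φ : ℝ → ℝ) (R P : ℝ) (m : ℕ) (t : ℝ) : ℝ :=
  ∫ y in (t * R)..(t * P), (y - t * R) ^ (m - 1) / (P - R) ^ m * exp (-φ y)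

section TruncatedMoment

variable {φ : ℝ → ℝ} {R P t : ℝ}

lemma truncatedMoment_succ (k : ℕ) :
    truncatedMoment φ R P (k + 1) t
      = (∫ y in (t * R)..(t * P), (y - t * R) ^ k * exp (-φ y)) / (P - R) ^ (k + 1) := by
  rw [truncatedMoment, ← intervalIntegral.integral_div]
  congr 1 with y
  rw [Nat.add_sub_cancel]
  ring

lemma monotoneOn_Icc_mul (hφ : MonotoneOn φ (Ici 0)) (hR : 0 < R) (ht : 0 ≤ t) :
    MonotoneOn φ (Icc (t * R) (t * P)) :=
  hφ.mono fun _ hy => (mul_nonneg ht hR.le).trans hy.1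

variable (hφ : MonotoneOn φ (Ici 0)) (hR : 0 < R) (hRP : R < P)
include hφ hR hRP

lemma truncatedMoment_pos (ht : 0 < t) (k : ℕ) : 0 < truncatedMoment φ R P (k + 1) t := by
  rw [truncatedMoment_succ]
  exact div_pos (integral_sub_pow_mul_exp_neg_pos (monotoneOn_Icc_mul hφ hR ht.le)
    (by gcongr) k) (pow_pos (sub_pos.2 hRP) _)

lemma truncatedMoment_le (ht : 0 ≤ t) (k : ℕ) :
    truncatedMoment φ R P (k + 1) t ≤ exp (-φ (t * R)) * t ^ (k + 1) := by
  have hPR : 0 < P - R := sub_pos.2 hRP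
  have hL : 0 ≤ t * (P - R) := mul_nonneg ht hPR.le
  rw [truncatedMoment_succ, div_le_iff₀ (pow_pos hPR _)]
  calc _ ≤ exp (-φ (t * R)) * ((t * P - t * R) ^ (k + 1) / (k + 1)) :=
        integral_sub_pow_mul_exp_neg_le (monotoneOn_Icc_mul hφ hR ht) (by gcongr) k
    _ = exp (-φ (t * R)) * ((t * (P - R)) ^ (k + 1) / (k + 1)) := by
        rw [show t * P - t * R = t * (P - R) by ring]
    _ ≤ exp (-φ (t * R)) * (t * (P - R)) ^ (k + 1) := by
        gcongr
        exact div_le_self (pow_nonneg hL _) (by linarith)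
    _ = exp (-φ (t * R)) * t ^ (k + 1) * (P - R) ^ (k + 1) := by rw [mul_pow, mul_assoc]

lemma le_truncatedMoment (ht : 0 ≤ t) {δ : ℝ} (hδ : 0 ≤ δ) (hδt : δ ≤ t * (P - R))
    (k : ℕ) :
    exp (-φ (t * R + δ)) * ((δ / (P - R)) ^ (k + 1) / (k + 1))
      ≤ truncatedMoment φ R P (k + 1) t := by
  have hPR : 0 < P - R := sub_pos.2 hRP
  rw [truncatedMoment_succ, le_div_iff₀ (pow_pos hPR _)]
  calc _ = exp (-φ (t * R + δ)) * (δ ^ (k + 1) / (k + 1)) := by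
        rw [div_pow]
        field_simp
    _ ≤ _ := le_integral_sub_pow_mul_exp_neg (monotoneOn_Icc_mul hφ hR ht) hδ (by linarith) k

lemma truncatedMoment_succ_succ_le (ht : 0 ≤ t) (k : ℕ) :
    truncatedMoment φ R P (k + 2) t ≤ t * truncatedMoment φ R P (k + 1) t := by
  have hPR : 0 < P - R := sub_pos.2 hRP
  rw [truncatedMoment_succ, truncatedMoment_succ, div_le_iff₀ (pow_pos hPR _)]
  calc _ ≤ (t * P - t * R) * ∫ y in (t * R)..(t * P), (y - t * R) ^ k * exp (-φ y) :=
        integral_sub_pow_succ_mul_exp_neg_le (monotoneOn_Icc_mul hφ hR ht) (by gcongr) k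
    _ = _ := by
        rw [show t * P - t * R = t * (P - R) by ring]
        field_simp
        ring

lemma sub_le_neg_log_truncatedMoment (ht : 0 < t) (k : ℕ) :
    φ (t * R) - (k + 1) * log t ≤ -log (truncatedMoment φ R P (k + 1) t) := by
  have h := log_le_log (truncatedMoment_pos hφ hR hRP ht k) (truncatedMoment_le hφ hR hRP ht.le k)
  rw [log_mul (exp_pos _).ne' (pow_pos ht _).ne', log_exp, log_pow] at h
  push_cast at h
  linarith

lemma neg_log_truncatedMoment_le (ht : 0 < t) {δ : ℝ} (hδ : 0 < δ) (hδt : δ ≤ t * (P - R))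
    (k : ℕ) :
    -log (truncatedMoment φ R P (k + 1) t)
      ≤ φ (t * R + δ) + (k + 1) * log ((P - R) / δ) + log (k + 1) := by
  have hPR : 0 < P - R := sub_pos.2 hRP
  have h := log_le_log (by positivity) (le_truncatedMoment hφ hR hRP ht.le hδ.le hδt k)
  rw [log_mul (exp_pos _).ne' (by positivity), log_exp, log_div (by positivity) (by positivity),
    log_pow, log_div hδ.ne' hPR.ne'] at h
  rw [log_div hPR.ne' hδ.ne']
  push_cast at h
  linarith

lemma neg_log_truncatedMoment_sub_log_le (ht : 0 < t) (k : ℕ) :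
    -log (truncatedMoment φ R P (k + 1) t) - log t
      ≤ -log (truncatedMoment φ R P (k + 2) t) := by
  have h := log_le_log (truncatedMoment_pos hφ hR hRP ht (k + 1))
    (truncatedMoment_succ_succ_le hφ hR hRP ht.le k)
  rw [log_mul ht.ne' (truncatedMoment_pos hφ hR hRP ht k).ne'] at h
  linarith

end TruncatedMoment

def steepSet (φ : ℝ → ℝ) (η : ℝ) : Set ℝ :=
  {x | 0 ≤ x ∧ φ x + 1 ≤ φ (x + exp (-(η * φ x)))}

section SteepSet

variable {φ : ℝ → ℝ} {η : ℝ}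

lemma sub_le_of_mem_steepSet (hφ : MonotoneOn φ (Ici 0)) (hη : 0 ≤ η) {k x y : ℝ}
    (hx : x ∈ steepSet φ η) (hkx : k ≤ φ x) (hy : 0 ≤ y) (hyk : φ y < k + 1) :
    y - x ≤ exp (-(η * k)) := by
  by_contra! h
  have hexp : exp (-(η * φ x)) ≤ exp (-(η * k)) :=
    exp_le_exp.2 (neg_le_neg (mul_le_mul_of_nonneg_left hkx hη))
  have hxy := hφ (mem_Ici.2 (add_nonneg hx.1 (exp_pos _).le)) (mem_Ici.2 hy)
    (by linarith : x + exp (-(η * φ x)) ≤ y)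
  linarith [hx.2]

lemma volume_steepSet_lt_top (hφ : MonotoneOn φ (Ici 0))
    (hφnonneg : ∀ x ∈ Ici (0:ℝ), 0 ≤ φ x) (hη : 0 < η) :
    volume (steepSet φ η) < ⊤ := by
  set S : ℕ → Set ℝ := fun k => {x ∈ steepSet φ η | φ x ∈ Ico (k : ℝ) (k + 1)}
  have hcover : steepSet φ η ⊆ ⋃ k, S k := fun x hx =>
    mem_iUnion.2 ⟨⌊φ x⌋₊, hx, Nat.floor_le (hφnonneg x hx.1), Nat.lt_floor_add_one _⟩
  have hS : ∀ k : ℕ, volume (S k) ≤ ENNReal.ofReal (exp (-(η * k))) := fun k =>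
    (Real.volume_le_diam _).trans <| Metric.ediam_le fun x hx y hy => by
      rw [edist_dist, Real.dist_eq]
      refine ENNReal.ofReal_le_ofReal (abs_sub_le_iff.2 ⟨?_, ?_⟩)
      · exact sub_le_of_mem_steepSet hφ hη.le hy.1 hy.2.1 hx.1.1 hx.2.2
      · exact sub_le_of_mem_steepSet hφ hη.le hx.1 hx.2.1 hy.1.1 hy.2.2
  have hsum : Summable fun k : ℕ => exp (-(η * k)) :=
    (summable_exp_nat_mul_iff.2 (neg_lt_zero.2 hη)).congr fun k => by ring_nf
  calc volume (steepSet φ η) ≤ ∑' k, volume (S k) :=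
        (measure_mono hcover).trans (measure_iUnion_le _)
    _ ≤ ∑' k : ℕ, ENNReal.ofReal (exp (-(η * k))) := ENNReal.tsum_le_tsum hS
    _ < ⊤ := by
      rw [← ENNReal.ofReal_tsum_of_nonneg (fun _ => (exp_pos _).le) hsum]
      exact ENNReal.ofReal_lt_top

lemma volume_preimage_mul_steepSet_lt_top (hφ : MonotoneOn φ (Ici 0))
    (hφnonneg : ∀ x ∈ Ici (0:ℝ), 0 ≤ φ x) (hη : 0 < η) {R : ℝ} (hR : R ≠ 0) :
    volume ((· * R) ⁻¹' steepSet φ η) < ⊤ := by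
  rw [Real.volume_preimage_mul_right hR]
  exact ENNReal.mul_lt_top ENNReal.ofReal_lt_top (volume_steepSet_lt_top hφ hφnonneg hη)

end SteepSet

section Asymptotics

variable {φ : ℝ → ℝ} {R P : ℝ} (hφ : MonotoneOn φ (Ici 0))
  (hconv : ConvexOn ℝ (Ici 0) φ)
  (hnc : ∃ a ∈ Ici (0:ℝ), ∃ b ∈ Ici (0:ℝ), φ a ≠ φ b) (hR : 0 < R) (hRP : R < P)
include hφ hconv hnc hR hRP

lemma exists_eventually_mul_le_neg_log_truncatedMoment (k : ℕ) :
    ∃ c > 0, ∀ᶠ t in atTop, c * t ≤ -log (truncatedMoment φ R P (k + 1) t) := by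
  obtain ⟨κ, hκ, c₀, hlin⟩ := exists_pos_mul_add_le_of_convexOn hφ hconv hnc
  refine ⟨κ * R / 2, by positivity, ?_⟩
  filter_upwards [eventually_gt_atTop 0,
    eventually_mul_log_add_le_mul (by positivity : 0 < κ * R / 2) (k + 1) (-c₀)] with t ht hlog
  have hφt := hlin (t * R) (mem_Ici.2 (by positivity))
  have hf := sub_le_neg_log_truncatedMoment hφ hR hRP ht k
  linarith

lemma eventually_one_sub_le_neg_log_truncatedMoment_div (k : ℕ) {ε : ℝ} (hε : 0 < ε) :
    ∀ᶠ t in atTop, 1 - ε ≤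
      -log (truncatedMoment φ R P (k + 2) t) / -log (truncatedMoment φ R P (k + 1) t) := by
  obtain ⟨c, hc, hlin⟩ :=
    exists_eventually_mul_le_neg_log_truncatedMoment hφ hconv hnc hR hRP k
  filter_upwards [eventually_gt_atTop 0, hlin,
    eventually_mul_log_add_le_mul (mul_pos hε hc) 1 0] with t ht hct hlog
  rw [le_div_iff₀ ((mul_pos hc ht).trans_le hct)]
  have hsucc := neg_log_truncatedMoment_sub_log_le hφ hR hRP ht k
  linarith [mul_le_mul_of_nonneg_left hct hε.le]

lemma exists_eventually_mul_mem_steepSet_of_lt_div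
    (hφnonneg : ∀ x ∈ Ici (0:ℝ), 0 ≤ φ x) (k : ℕ) {α : ℝ} (hα : 1 < α) :
    ∃ η > 0, ∀ᶠ t in atTop,
      α < -log (truncatedMoment φ R P (k + 2) t) / -log (truncatedMoment φ R P (k + 1) t) →
        t * R ∈ steepSet φ η := by
  obtain ⟨c, hc, hlin⟩ :=
    exists_eventually_mul_le_neg_log_truncatedMoment hφ hconv hnc hR hRP k
  have hPR : 0 < P - R := sub_pos.2 hRP
  obtain ⟨θ, hθ0, rfl⟩ : ∃ θ > 0, α = 1 + 2 * θ :=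
    ⟨(α - 1) / 2, by linarith, by ring⟩
  refine ⟨θ / (k + 2), by positivity, ?_⟩
  filter_upwards [eventually_gt_atTop 0, eventually_ge_atTop (P - R)⁻¹, hlin,
    eventually_mul_log_add_le_mul (mul_pos hθ0 hc) ((1 + θ) * (k + 1))
      (1 + (k + 2) * log (P - R) + log (k + 2))] with t ht htPR hct hlog hratio
  have htR : 0 ≤ t * R := by positivity
  refine ⟨htR, ?_⟩
  by_contra! hflat
  -- Off `steepSet`, `φ (t R + δ) < φ (t R) + 1` and `δ ^ (k + 2) = exp (-θ φ (t R))`, so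
  -- `le_truncatedMoment` bounds `-log F_{k+2}` by `(1 + θ) φ (t R) + O(1)`.
  set δ := exp (-(θ / (k + 2) * φ (t * R)))
  have hδ1 : δ ≤ 1 :=
    exp_le_one_iff.2 (neg_nonpos.2 (mul_nonneg (by positivity) (hφnonneg _ htR)))
  have hδt : δ ≤ t * (P - R) := by
    rw [inv_le_iff_one_le_mul₀ hPR] at htPR
    linarith
  have hg : -log (truncatedMoment φ R P (k + 2) t)
      ≤ φ (t * R + δ) + ((k + 1 : ℕ) + 1) * log ((P - R) / δ) + log ((k + 1 : ℕ) + 1) :=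
    neg_log_truncatedMoment_le hφ hR hRP ht (exp_pos _) hδt (k + 1)
  have hlogδ : ((k + 1 : ℕ) + 1) * log ((P - R) / δ)
      = (k + 2) * log (P - R) + θ * φ (t * R) := by
    rw [log_div hPR.ne' (exp_pos _).ne', log_exp]
    push_cast
    field_simp
    ring
  rw [hlogδ, show ((k + 1 : ℕ) : ℝ) + 1 = k + 2 by push_cast; ring] at hg
  have hf := sub_le_neg_log_truncatedMoment hφ hR hRP ht k
  rw [lt_div_iff₀ ((mul_pos hc ht).trans_le hct)] at hratio
  linarith [mul_le_mul_of_nonneg_left hf (by linarith : (0:ℝ) ≤ 1 + θ),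
    mul_le_mul_of_nonneg_left hct hθ0.le]

end Asymptotics

theorem stmt_4 (R P : ℝ) (hR : 0 < R) (hRP : R < P)
    (φ : ℝ → ℝ)
    (hφmono : MonotoneOn φ (Ici 0))
    (hφconv : ConvexOn ℝ (Ici 0) φ)
    (hφnonneg : ∀ x ∈ Ici (0:ℝ), 0 ≤ φ x)
    (hφnonconst : ∃ a ∈ Ici (0:ℝ), ∃ b ∈ Ici (0:ℝ), φ a ≠ φ b)
    (F : ℕ → ℝ → ℝ)
    (hF : ∀ m : ℕ, 1 ≤ m → ∀ t : ℝ, 0 < t →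
      F m t = ∫ y in (t * R)..(t * P),
        (y - t * R) ^ (m - 1) / (P - R) ^ m * Real.exp (-φ y)) :
    ∀ i : ℕ, 2 ≤ i →
      (liminf (fun t : ℝ => Real.log (F i t) / Real.log (F (i - 1) t)) atTop = 1 ∧
       ∀ α : ℝ, 1 < α →
         volume {t : ℝ | 0 ≤ t ∧
           α < (-Real.log (F i t)) / (-Real.log (F (i - 1) t))} < ⊤) := by
  intro i hi
  obtain ⟨k, rfl⟩ : ∃ k, i = k + 2 := ⟨i - 2, by omega⟩
  rw [show k + 2 - 1 = k + 1 from rfl]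
  have hratio : ∀ᶠ t in atTop, -log (F (k + 2) t) / -log (F (k + 1) t)
      = -log (truncatedMoment φ R P (k + 2) t) / -log (truncatedMoment φ R P (k + 1) t) :=
    (eventually_gt_atTop 0).mono fun t ht => by
      rw [hF (k + 2) (by omega) t ht, hF (k + 1) (by omega) t ht]
      rfl
  have hvol : ∀ α : ℝ, 1 < α → volume {t : ℝ | 0 ≤ t ∧
      α < -log (F (k + 2) t) / -log (F (k + 1) t)} < ⊤ := by
    intro α hα
    obtain ⟨η, hη, hsteep⟩ := exists_eventually_mul_mem_steepSet_of_lt_div hφmono hφconv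
      hφnonconst hR hRP hφnonneg k hα
    refine volume_setOf_lt_top_of_eventually_mem
      (volume_preimage_mul_steepSet_lt_top hφmono hφnonneg hη hR.ne') ?_
    filter_upwards [hratio, hsteep] with t heq h
    rwa [heq]
  refine ⟨liminf_eq_of_forall_eventually_of_forall_frequently (fun ε hε => ?_) fun ε hε => ?_,
    hvol⟩
  · filter_upwards [hratio, eventually_one_sub_le_neg_log_truncatedMoment_div hφmono hφconv
      hφnonconst hR hRP k hε] with t heq h
    rwa [← neg_div_neg_eq, heq]
  · refine ((frequently_atTop_notMem_of_volume_lt_top (hvol (1 + ε) (by linarith))).and_eventually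
      (eventually_ge_atTop 0)).mono fun t ⟨hbad, ht⟩ => ?_
    rw [← neg_div_neg_eq]
    exact not_lt.1 fun h => hbad ⟨ht, h⟩
end

section
/- Let n ≥ 1, let K, L ⊂ ℝⁿ be convex bodies containing the origin in their interiors, let φ : [0,∞) → [0,∞) be an increasing, non-constant, convex function, and let μ be the (finite) measure on ℝⁿ with density x ↦ exp(−φ(‖x‖_L)) with respect to Lebesgue measure. Then limsup_{t→∞} ln μ(ℝⁿ \ tK) / φ(r(K,L)·t) = −1. -/
/-!
Write `r` for the inradius. It equals `1 / max_L ‖·‖_K`, so `r • L ⊆ K` and there is a contact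
point `x₀` with `‖x₀‖_L ≤ r` and `‖x₀‖_K = 1`.

Upper bound: outside `tK` we have `‖x‖_L ≥ rt`, and an exponential Chebyshev inequality gives
`μ(ℝⁿ \ tK) ≤ B_c e^{-cφ(rt)}` for every `c < 1`; here `B_c = ∫ e^{-(1-c)φ(‖x‖_L)} dx` is finite
because a convex, increasing, non-constant `φ` grows at least linearly.

Lower bound: the ball of radius `ρδ` around `(t + δ)x₀`, with `B(0, ρ) ⊆ K ∩ L`, lies outside
`tK` and inside `{‖x‖_L ≤ rt + (r + 1)δ}`, so `μ(ℝⁿ \ tK) ≳ δⁿ e^{-φ(rt + (r+1)δ)}`. With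
`δ = e^{-εφ(rt)}` this is `≳ e^{-(1 + (n+1)ε)φ(rt)}` whenever `φ(rt + (r+1)δ) ≤ (1 + ε)φ(rt)`.
That need not hold for all large `t`, but it holds for arbitrarily large `t`, which is what the
`limsup` sees.
-/

open MeasureTheory Filter Set Pointwise

/-- The `L`-inradius `r(K, L) = sup{R > 0 : R·L ⊆ K}`. -/
noncomputable def inradiusOf {n : ℕ}
    (K L : Set (EuclideanSpace ℝ (Fin n))) : ℝ :=
  sSup {R : ℝ | 0 < R ∧ R • L ⊆ K}

open Topology Metric Real

section ConvexFunction

variable {φ : ℝ → ℝ}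

lemma MonotoneOn.exists_pos_lt_of_ne (hmono : MonotoneOn φ (Ici 0))
    (h : ∃ a ∈ Ici (0:ℝ), ∃ b ∈ Ici (0:ℝ), φ a ≠ φ b) : ∃ s > 0, φ 0 < φ s := by
  by_contra! hle
  obtain ⟨a, ha, b, hb, hab⟩ := h
  have hconst : ∀ u ∈ Ici (0:ℝ), φ u = φ 0 := fun u hu =>
    hu.eq_or_lt.elim (fun h => by rw [h])
      fun hpos => le_antisymm (hle u hpos) (hmono self_mem_Ici hu hu)
  exact hab (by rw [hconst a ha, hconst b hb])

lemma ConvexOn.exists_linear_lower_bound (hconv : ConvexOn ℝ (Ici 0) φ)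
    (hmono : MonotoneOn φ (Ici 0)) {s : ℝ} (hs : 0 < s) (hφs : φ 0 < φ s) :
    ∃ a > 0, ∃ b, ∀ u ≥ 0, a * u - b ≤ φ u := by
  set a := (φ s - φ 0) / s
  have ha : 0 < a := div_pos (sub_pos.2 hφs) hs
  refine ⟨a, ha, a * s - φ 0, fun u hu => ?_⟩
  rcases le_total u s with hus | hsu
  · nlinarith [mul_le_mul_of_nonneg_left hus ha.le, hmono self_mem_Ici hu hu]
  · have hu₀ : 0 < u := hs.trans_le hsu
    have hslope : a ≤ (φ u - φ 0) / u := by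
      simpa using hconv.secant_mono self_mem_Ici hs.le hu₀.le hs.ne' hu₀.ne' hsu
    nlinarith [(le_div_iff₀ hu₀).1 hslope]

lemma tendsto_atTop_of_linear_lower_bound {a b : ℝ} (ha : 0 < a)
    (h : ∀ u ≥ 0, a * u - b ≤ φ u) : Tendsto φ atTop atTop := by
  refine tendsto_atTop_mono' atTop ((eventually_ge_atTop 0).mono h) ?_
  simpa [sub_eq_add_neg] using tendsto_atTop_add_const_right _ (-b) (tendsto_id.const_mul_atTop ha)

lemma Real.exp_neg_le_inv {x : ℝ} (hx : 0 < x) : exp (-x) ≤ x⁻¹ := by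
  rw [exp_neg]
  exact inv_anti₀ hx (by linarith [add_one_le_exp x])

/-- Otherwise, iterating `s ↦ s + β e^{-εφ(s)}` from a point where `εφ ≥ 1` would multiply `φ`
by `1 + ε` at each step while the steps, at most `β (1 + ε)^{-k}`, stay summable: `φ` would be
unbounded on a bounded interval. -/
lemma MonotoneOn.frequently_le_one_add_mul (hmono : MonotoneOn φ (Ici 0))
    (htop : Tendsto φ atTop atTop) {β ε : ℝ} (hβ : 0 < β) (hε : 0 < ε) :
    ∃ᶠ s in atTop, φ (s + β * exp (-(ε * φ s))) ≤ (1 + ε) * φ s := by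
  intro hev
  obtain ⟨s₀, hs₀⟩ := eventually_atTop.1
    ((hev.and (eventually_ge_atTop 0)).and (htop.eventually_ge_atTop ε⁻¹))
  have hstep : ∀ s ≥ s₀, 0 ≤ s ∧ 1 ≤ ε * φ s ∧
      (1 + ε) * φ s < φ (s + β * exp (-(ε * φ s))) := fun s hs => by
    obtain ⟨⟨hlt, hs0⟩, hφ⟩ := hs₀ s hs
    exact ⟨hs0, by rwa [← inv_mul_le_iff₀ hε, mul_one], not_le.1 hlt⟩
  set q := (1 + ε)⁻¹
  set D := β * (1 + ε) / ε
  have hDq : β + D * q = D := by simp only [q, D]; field_simp; ring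
  let u : ℕ → ℝ := fun k => Nat.rec s₀ (fun _ x => x + β * exp (-(ε * φ x))) k
  have hiter : ∀ k, s₀ ≤ u k ∧ (1 + ε) ^ k ≤ ε * φ (u k) ∧ u k + D * q ^ k ≤ s₀ + D := by
    intro k
    induction k with
    | zero => simpa [u] using (hstep s₀ le_rfl).2.1
    | succ k ih =>
      obtain ⟨hu, hgrow, hbudget⟩ := ih
      obtain ⟨-, -, hmul⟩ := hstep (u k) hu
      have hpow : 0 < (1 + ε) ^ k := by positivity
      have hjump : β * exp (-(ε * φ (u k))) ≤ β * q ^ k := by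
        refine mul_le_mul_of_nonneg_left ?_ hβ.le
        calc exp (-(ε * φ (u k))) ≤ (ε * φ (u k))⁻¹ := exp_neg_le_inv (hpow.trans_le hgrow)
          _ ≤ ((1 + ε) ^ k)⁻¹ := inv_anti₀ hpow hgrow
          _ = q ^ k := (inv_pow _ _).symm
      refine ⟨hu.trans (le_add_of_nonneg_right (by positivity)), ?_, ?_⟩
      · calc (1 + ε) ^ (k + 1) = (1 + ε) * (1 + ε) ^ k := pow_succ' _ _
          _ ≤ (1 + ε) * (ε * φ (u k)) := by gcongr
          _ ≤ ε * φ (u (k + 1)) := by nlinarith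
      · calc u (k + 1) + D * q ^ (k + 1) ≤ u k + β * q ^ k + D * q * q ^ k := by
              rw [pow_succ']; simp only [u] at hjump ⊢; linarith
          _ = u k + D * q ^ k := by linear_combination q ^ k * hDq
          _ ≤ s₀ + D := hbudget
  obtain ⟨k, hk⟩ := pow_unbounded_of_one_lt (ε * φ (s₀ + D)) (by linarith : (1:ℝ) < 1 + ε)
  obtain ⟨hu, hgrow, hbudget⟩ := hiter k
  have hbounded : u k ≤ s₀ + D := by nlinarith [show 0 ≤ D * q ^ k by positivity]
  have hφu := hmono (hstep _ hu).1 ((hstep _ hu).1.trans hbounded) hbounded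
  nlinarith

end ConvexFunction

section Asymptotics

variable {α : Type*} {l : Filter α}

lemma limsup_eq_of_forall_eventually_le_of_forall_frequently_ge {u : α → ℝ} {c : ℝ}
    (hle : ∀ ε > 0, ∀ᶠ x in l, u x ≤ c + ε) (hge : ∀ ε > 0, ∃ᶠ x in l, c - ε ≤ u x) :
    limsup u l = c := by
  have hbdd : IsBoundedUnder (· ≤ ·) l u := isBoundedUnder_of_eventually_le (hle 1 one_pos)
  have hcobdd : IsCoboundedUnder (· ≤ ·) l u := .of_frequently_ge (hge 1 one_pos)
  refine le_antisymm (le_of_forall_pos_le_add fun ε hε => limsup_le_of_le hcobdd (hle ε hε))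
    (le_of_forall_pos_le_add fun ε hε => ?_)
  linarith [le_limsup_of_frequently_le (hge ε hε) hbdd]

lemma limsup_log_div_eq_neg_one {m Φ : α → ℝ} (hΦ : Tendsto Φ l atTop)
    (hpos : ∀ᶠ x in l, 0 < m x)
    (hupper : ∀ c ∈ Ioo (0:ℝ) 1, ∃ B, ∀ᶠ x in l, m x ≤ B * exp (-(c * Φ x)))
    (hlower : ∀ c > 1, ∃ B > 0, ∃ᶠ x in l, B * exp (-(c * Φ x)) ≤ m x) :
    limsup (fun x => log (m x) / Φ x) l = -1 := by
  have hsmall : ∀ B ε : ℝ, 0 < ε → ∀ᶠ x in l, 0 < Φ x ∧ |log B| ≤ ε * Φ x := fun B ε hε => by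
    filter_upwards [hΦ.eventually_gt_atTop 0, hΦ.eventually_ge_atTop (|log B| / ε)] with x hx hB
    exact ⟨hx, by rwa [div_le_iff₀' hε] at hB⟩
  refine limsup_eq_of_forall_eventually_le_of_forall_frequently_ge (fun ε hε => ?_) fun ε hε => ?_
  · obtain ⟨B, hB⟩ := hupper (1 - min ε 1 / 2) ⟨by linarith [min_le_right ε 1],
      by linarith [lt_min hε one_pos]⟩
    filter_upwards [hpos, hB, hsmall B (ε / 2) (half_pos hε)] with x hm hmB ⟨hΦx, hlogB⟩
    have hBpos : 0 < B := pos_of_mul_pos_left (hm.trans_le hmB) (exp_pos _).le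
    have hlog : log (m x) ≤ log B - (1 - min ε 1 / 2) * Φ x := by
      simpa [log_mul hBpos.ne' (exp_pos _).ne', sub_eq_add_neg] using log_le_log hm hmB
    rw [div_le_iff₀ hΦx]
    nlinarith [min_le_left ε 1, le_abs_self (log B)]
  · obtain ⟨B, hBpos, hB⟩ := hlower (1 + ε / 2) (by linarith)
    refine (hB.and_eventually (hsmall B (ε / 2) (half_pos hε))).mono
      fun x ⟨hmB, hΦx, hlogB⟩ => ?_
    have hlog : log B - (1 + ε / 2) * Φ x ≤ log (m x) := by
      simpa [log_mul hBpos.ne' (exp_pos _).ne', sub_eq_add_neg] using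
        log_le_log (by positivity) hmB
    rw [le_div_iff₀ hΦx]
    nlinarith [neg_abs_le (log B)]

end Asymptotics

section Gauge

variable {E : Type*} [NormedAddCommGroup E] [NormedSpace ℝ E] {K L : Set E}

lemma mem_smul_of_gauge_lt (hL : Convex ℝ L) (hL₀ : L ∈ 𝓝 0) {c : ℝ} (hc : 0 < c) {x : E}
    (hx : gauge L x < c) : x ∈ c • L := by
  rw [mem_smul_set_iff_inv_smul_mem₀ hc.ne']
  refine setOfPred_gauge_lt_one_subset_self hL (mem_of_mem_nhds hL₀) (absorbent_nhds_zero hL₀) ?_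
  rwa [mem_ofPred_eq, gauge_smul_of_nonneg (inv_nonneg.2 hc.le), smul_eq_mul, inv_mul_lt_one₀ hc]

lemma gauge_le_gauge_add_dist_div (hL : Convex ℝ L) {ρ : ℝ} (hρ : 0 < ρ) (hball : ball 0 ρ ⊆ L)
    (x y : E) : gauge L x ≤ gauge L y + dist x y / ρ := by
  calc gauge L x = gauge L (y + (x - y)) := by rw [add_sub_cancel]
    _ ≤ gauge L y + gauge L (x - y) := gauge_add_le hL ((absorbent_ball_zero hρ).mono hball) _ _
    _ ≤ gauge L y + dist x y / ρ := by
      rw [dist_eq_norm, ← gauge_ball hρ.le]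
      exact add_le_add_right (gauge_mono (absorbent_ball_zero hρ) hball _) _

lemma compl_smul_subset_setOf_le_gauge (hL : Convex ℝ L) (hL₀ : L ∈ 𝓝 0) {R t : ℝ}
    (hR : 0 < R) (ht : 0 < t) (hRLK : R • L ⊆ K) : (t • K)ᶜ ⊆ {x | R * t ≤ gauge L x} := by
  intro x hx
  by_contra! hlt
  have hx' := mem_smul_of_gauge_lt hL hL₀ (by positivity) (not_le.1 hlt)
  rw [mul_comm, mul_smul] at hx'
  exact hx (smul_set_mono hRLK hx')

lemma ball_subset_compl_smul_inter_setOf_gauge_le (hK : Convex ℝ K) (hL : Convex ℝ L) {ρ : ℝ}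
    (hρ : 0 < ρ) (hρK : ball 0 ρ ⊆ K) (hρL : ball 0 ρ ⊆ L) {R : ℝ} {x₀ : E}
    (hx₀L : gauge L x₀ ≤ R) (hx₀K : 1 ≤ gauge K x₀) {t δ : ℝ} (ht : 0 ≤ t) (hδ : 0 ≤ δ) :
    ball ((t + δ) • x₀) (ρ * δ) ⊆ (t • K)ᶜ ∩ {x | gauge L x ≤ R * t + (R + 1) * δ} := by
  intro x hx
  have hdist : dist x ((t + δ) • x₀) / ρ < δ := by
    rw [div_lt_iff₀ hρ]; linarith [mem_ball.1 hx]
  have hgauge (s : Set E) : gauge s ((t + δ) • x₀) = (t + δ) * gauge s x₀ := by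
    rw [gauge_smul_of_nonneg (by positivity), smul_eq_mul]
  refine ⟨fun hxK => ?_, ?_⟩
  · have hcenter := gauge_le_gauge_add_dist_div hK hρ hρK ((t + δ) • x₀) x
    rw [dist_comm, hgauge] at hcenter
    nlinarith [gauge_le_of_mem ht hxK]
  · have hx' := gauge_le_gauge_add_dist_div hL hρ hρL x ((t + δ) • x₀)
    rw [hgauge] at hx'
    show gauge L x ≤ R * t + (R + 1) * δ
    nlinarith

lemma exists_isMaxOn_gauge_pos [Nontrivial E] (hKb : Bornology.IsBounded K) (hK₀ : K ∈ 𝓝 0)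
    (hK : Convex ℝ K) (hLc : IsCompact L) (hL₀ : L ∈ 𝓝 0) :
    ∃ x₁ ∈ L, IsMaxOn (gauge K) L x₁ ∧ 0 < gauge K x₁ := by
  obtain ⟨x₁, hx₁, hmax⟩ :=
    hLc.exists_isMaxOn ⟨0, mem_of_mem_nhds hL₀⟩ (continuous_gauge hK hK₀).continuousOn
  obtain ⟨y, hy0, hyL⟩ := Filter.nonempty_of_mem (inter_mem_nhdsWithin {0}ᶜ hL₀)
  have hgy : 0 < gauge K y :=
    (gauge_pos (absorbent_nhds_zero hK₀) ((NormedSpace.isVonNBounded_iff ℝ).2 hKb)).2 hy0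
  exact ⟨x₁, hx₁, hmax, hgy.trans_le (hmax hyL)⟩

end Gauge

section Inradius

variable {n : ℕ} {K L : Set (EuclideanSpace ℝ (Fin n))}

lemma inradiusOf_eq_inv_gauge (hK : Convex ℝ K) (hK₀ : K ∈ 𝓝 0) {x₁ : EuclideanSpace ℝ (Fin n)}
    (hx₁ : x₁ ∈ L) (hmax : IsMaxOn (gauge K) L x₁) (hpos : 0 < gauge K x₁) :
    inradiusOf K L = (gauge K x₁)⁻¹ := by
  have hsub : ∀ R, 0 < R → R < (gauge K x₁)⁻¹ → R • L ⊆ K := by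
    rintro R hR hRM _ ⟨y, hy, rfl⟩
    refine setOfPred_gauge_lt_one_subset_self hK (mem_of_mem_nhds hK₀) (absorbent_nhds_zero hK₀) ?_
    rw [mem_ofPred_eq, gauge_smul_of_nonneg hR.le, smul_eq_mul]
    calc R * gauge K y ≤ R * gauge K x₁ := mul_le_mul_of_nonneg_left (hmax hy) hR.le
      _ < (gauge K x₁)⁻¹ * gauge K x₁ := by gcongr
      _ = 1 := inv_mul_cancel₀ hpos.ne'
  have hM := inv_pos.2 hpos
  apply csSup_eq_of_forall_le_of_forall_lt_exists_gt
  · exact ⟨_, half_pos hM, hsub _ (half_pos hM) (half_lt_self hM)⟩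
  · rintro R ⟨hR, hRLK⟩
    have hRx₁ := gauge_le_one_of_mem (hRLK (smul_mem_smul_set hx₁))
    rw [gauge_smul_of_nonneg hR.le, smul_eq_mul] at hRx₁
    rwa [← le_div_iff₀ hpos, one_div] at hRx₁
  · intro w hw
    refine ⟨(max w 0 + (gauge K x₁)⁻¹) / 2, ⟨by positivity, hsub _ (by positivity) ?_⟩, ?_⟩
    · linarith [max_lt hw hM]
    · linarith [le_max_left w 0]

lemma inradiusOf_pos [Nontrivial (EuclideanSpace ℝ (Fin n))] (hKc : IsCompact K)
    (hK : Convex ℝ K) (hK₀ : K ∈ 𝓝 0) (hLc : IsCompact L) (hL₀ : L ∈ 𝓝 0) :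
    0 < inradiusOf K L := by
  obtain ⟨x₁, hx₁, hmax, hpos⟩ := exists_isMaxOn_gauge_pos hKc.isBounded hK₀ hK hLc hL₀
  rw [inradiusOf_eq_inv_gauge hK hK₀ hx₁ hmax hpos]
  positivity

lemma inradiusOf_smul_subset [Nontrivial (EuclideanSpace ℝ (Fin n))] (hKc : IsCompact K)
    (hK : Convex ℝ K) (hK₀ : K ∈ 𝓝 0) (hLc : IsCompact L) (hL₀ : L ∈ 𝓝 0) :
    inradiusOf K L • L ⊆ K := by
  obtain ⟨x₁, hx₁, hmax, hpos⟩ := exists_isMaxOn_gauge_pos hKc.isBounded hK₀ hK hLc hL₀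
  rw [inradiusOf_eq_inv_gauge hK hK₀ hx₁ hmax hpos]
  rintro _ ⟨y, hy, rfl⟩
  refine hKc.isClosed.closure_subset ((gauge_le_one_iff_mem_closure hK hK₀).1 ?_)
  rw [gauge_smul_of_nonneg (by positivity), smul_eq_mul, inv_mul_le_iff₀ hpos, mul_one]
  exact hmax hy

lemma exists_gauge_le_inradiusOf_gauge_eq_one [Nontrivial (EuclideanSpace ℝ (Fin n))]
    (hKc : IsCompact K) (hK : Convex ℝ K) (hK₀ : K ∈ 𝓝 0) (hLc : IsCompact L) (hL₀ : L ∈ 𝓝 0) :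
    ∃ x₀, gauge L x₀ ≤ inradiusOf K L ∧ gauge K x₀ = 1 := by
  obtain ⟨x₁, hx₁, hmax, hpos⟩ := exists_isMaxOn_gauge_pos hKc.isBounded hK₀ hK hLc hL₀
  rw [inradiusOf_eq_inv_gauge hK hK₀ hx₁ hmax hpos]
  refine ⟨(gauge K x₁)⁻¹ • x₁, ?_, ?_⟩ <;> rw [gauge_smul_of_nonneg (by positivity), smul_eq_mul]
  · simpa using mul_le_mul_of_nonneg_left (gauge_le_one_of_mem hx₁) (inv_nonneg.2 hpos.le)
  · exact inv_mul_cancel₀ hpos.ne'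

end Inradius

section Density

variable {α : Type*} [MeasurableSpace α] {ν : Measure α} {h : α → ℝ} {S : Set α}

lemma ofReal_exp_neg_mul_le_withDensity (hS : MeasurableSet S) {M : ℝ} (hM : ∀ x ∈ S, h x ≤ M) :
    ENNReal.ofReal (exp (-M)) * ν S ≤ ν.withDensity (fun x => ENNReal.ofReal (exp (-h x))) S := by
  rw [withDensity_apply _ hS, ← setLIntegral_const]
  exact setLIntegral_mono' hS fun x hx =>
    ENNReal.ofReal_le_ofReal (exp_le_exp.2 (neg_le_neg (hM x hx)))

lemma withDensity_exp_neg_le (hS : MeasurableSet S) {c m : ℝ} (hc : 0 ≤ c)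
    (hm : ∀ x ∈ S, m ≤ h x) :
    ν.withDensity (fun x => ENNReal.ofReal (exp (-h x))) S ≤
      ENNReal.ofReal (exp (-(c * m))) * ∫⁻ x, ENNReal.ofReal (exp (-((1 - c) * h x))) ∂ν := by
  rw [withDensity_apply _ hS, ← lintegral_const_mul' _ _ ENNReal.ofReal_ne_top]
  refine (setLIntegral_mono' hS fun x hx => ?_).trans (setLIntegral_le_lintegral S _)
  rw [← ENNReal.ofReal_mul (exp_pos _).le, ← exp_add]
  exact ENNReal.ofReal_le_ofReal (exp_le_exp.2 (by nlinarith [hm x hx]))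

end Density

section HaarMeasure

variable {E : Type*} [NormedAddCommGroup E] [NormedSpace ℝ E] [FiniteDimensional ℝ E]
  [MeasurableSpace E] [BorelSpace E] (ν : Measure E) [ν.IsAddHaarMeasure]

lemma integrable_exp_neg_mul_norm [Nontrivial E] {b : ℝ} (hb : 0 < b) :
    Integrable (fun x : E => exp (-(b * ‖x‖))) ν := by
  rw [integrable_fun_norm_addHaar ν (f := fun y => exp (-(b * y)))]
  have hd : (-1 : ℝ) < ((Module.finrank ℝ E - 1 : ℕ) : ℝ) := by
    linarith [Nat.cast_nonneg (α := ℝ) (Module.finrank ℝ E - 1)]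
  refine (integrableOn_rpow_mul_exp_neg_mul_rpow hd one_pos hb).congr_fun (fun y _ => ?_)
    measurableSet_Ioi
  simp [rpow_natCast, neg_mul]

lemma hasFiniteIntegral_exp_neg_comp_gauge [Nontrivial E] {L : Set E}
    (hLb : Bornology.IsBounded L) (hL₀ : L ∈ 𝓝 0) {ψ : ℝ → ℝ} {a b : ℝ} (ha : 0 < a)
    (hψ : ∀ u ≥ 0, a * u - b ≤ ψ u) : HasFiniteIntegral (fun x => exp (-ψ (gauge L x))) ν := by
  obtain ⟨R, hR, hLR⟩ := hLb.subset_closedBall_lt 0 0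
  refine ((integrable_exp_neg_mul_norm ν (div_pos ha hR)).const_mul (exp b)).hasFiniteIntegral.mono
    (Eventually.of_forall fun x => ?_)
  have hx : a * (‖x‖ / R) ≤ a * gauge L x := mul_le_mul_of_nonneg_left
    (le_gauge_of_subset_closedBall (absorbent_nhds_zero hL₀) hR.le hLR) ha.le
  rw [norm_of_nonneg (exp_pos _).le, norm_of_nonneg (by positivity), ← exp_add]
  refine exp_le_exp.2 ?_
  linarith [hψ (gauge L x) (gauge_nonneg x), (by ring : a / R * ‖x‖ = a * (‖x‖ / R))]

end HaarMeasure

section GaugeDensity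

variable {E : Type*} [NormedAddCommGroup E] [NormedSpace ℝ E] [MeasurableSpace E] [BorelSpace E]
  {ν : Measure E} [ν.IsAddHaarMeasure] {μ : Measure E}
  {K L : Set E} {φ : ℝ → ℝ}

lemma ofReal_exp_neg_mul_le_measure_compl_smul
    (hμ : μ = ν.withDensity fun x => ENNReal.ofReal (exp (-φ (gauge L x))))
    (hmono : MonotoneOn φ (Ici 0)) (hK : Convex ℝ K) (hL : Convex ℝ L) {ρ : ℝ} (hρ : 0 < ρ)
    (hρK : ball 0 ρ ⊆ K) (hρL : ball 0 ρ ⊆ L) {R : ℝ} {x₀ : E} (hx₀L : gauge L x₀ ≤ R)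
    (hx₀K : 1 ≤ gauge K x₀) {t δ : ℝ} (ht : 0 ≤ t) (hδ : 0 ≤ δ) :
    ENNReal.ofReal (exp (-φ (R * t + (R + 1) * δ))) * ν (ball 0 (ρ * δ)) ≤ μ ((t • K)ᶜ) := by
  have hsub := ball_subset_compl_smul_inter_setOf_gauge_le hK hL hρ hρK hρL hx₀L hx₀K ht hδ
  rw [← ν.addHaar_ball_center ((t + δ) • x₀), hμ]
  refine (ofReal_exp_neg_mul_le_withDensity isOpen_ball.measurableSet fun x hx => ?_).trans
    (measure_mono fun x hx => (hsub hx).1)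
  exact hmono (gauge_nonneg x) ((gauge_nonneg x).trans (hsub hx).2) (hsub hx).2

lemma measure_compl_smul_pos
    (hμ : μ = ν.withDensity fun x => ENNReal.ofReal (exp (-φ (gauge L x))))
    (hmono : MonotoneOn φ (Ici 0)) (hK : Convex ℝ K) (hL : Convex ℝ L) {ρ : ℝ} (hρ : 0 < ρ)
    (hρK : ball 0 ρ ⊆ K) (hρL : ball 0 ρ ⊆ L) {R : ℝ} {x₀ : E} (hx₀L : gauge L x₀ ≤ R)
    (hx₀K : 1 ≤ gauge K x₀) {t : ℝ} (ht : 0 ≤ t) : 0 < μ ((t • K)ᶜ) :=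
  (ENNReal.mul_pos (ENNReal.ofReal_pos.2 (exp_pos _)).ne'
    (measure_ball_pos ν 0 (mul_pos hρ one_pos)).ne').trans_le
    (ofReal_exp_neg_mul_le_measure_compl_smul hμ hmono hK hL hρ hρK hρL hx₀L hx₀K ht zero_le_one)

lemma eventually_toReal_measure_compl_smul_le [FiniteDimensional ℝ E] [Nontrivial E]
    (hμ : μ = ν.withDensity fun x => ENNReal.ofReal (exp (-φ (gauge L x))))
    (hmono : MonotoneOn φ (Ici 0)) {a b : ℝ} (ha : 0 < a) (hlin : ∀ u ≥ 0, a * u - b ≤ φ u)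
    (hL : Convex ℝ L) (hLb : Bornology.IsBounded L) (hL₀ : L ∈ 𝓝 0) {R : ℝ} (hR : 0 < R)
    (hRLK : R • L ⊆ K) {c : ℝ} (hc : c ∈ Ioo (0:ℝ) 1) :
    ∃ B, ∀ᶠ t in atTop, (μ ((t • K)ᶜ)).toReal ≤ B * exp (-(c * φ (R * t))) := by
  set I := ∫⁻ x, ENNReal.ofReal (exp (-((1 - c) * φ (gauge L x)))) ∂ν
  have hI : I ≠ ⊤ := by
    have hfin := hasFiniteIntegral_exp_neg_comp_gauge ν hLb hL₀ (ψ := fun u => (1 - c) * φ u)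
      (b := (1 - c) * b) (mul_pos (sub_pos.2 hc.2) ha) fun u hu => by nlinarith [hlin u hu, hc.2]
    exact ((hasFiniteIntegral_iff_ofReal (.of_forall fun x => (exp_pos _).le)).1 hfin).ne
  refine ⟨I.toReal, (eventually_gt_atTop 0).mono fun t ht =>
    ENNReal.toReal_le_of_le_ofReal (by positivity) ?_⟩
  have hS : MeasurableSet {x | R * t ≤ gauge L x} :=
    measurableSet_le measurable_const (continuous_gauge hL hL₀).measurable
  calc μ ((t • K)ᶜ) ≤ μ {x | R * t ≤ gauge L x} :=
        measure_mono (compl_smul_subset_setOf_le_gauge hL hL₀ hR ht hRLK)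
    _ ≤ ENNReal.ofReal (exp (-(c * φ (R * t)))) * I := by
        rw [hμ]
        exact withDensity_exp_neg_le hS hc.1.le fun x hx =>
          hmono (mul_pos hR ht).le ((mul_pos hR ht).le.trans hx) hx
    _ = ENNReal.ofReal (I.toReal * exp (-(c * φ (R * t)))) := by
        rw [mul_comm, ENNReal.ofReal_mul ENNReal.toReal_nonneg, ENNReal.ofReal_toReal hI]

lemma frequently_le_toReal_measure_compl_smul [FiniteDimensional ℝ E] [Nontrivial E]
    [IsFiniteMeasure μ]
    (hμ : μ = ν.withDensity fun x => ENNReal.ofReal (exp (-φ (gauge L x))))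
    (hmono : MonotoneOn φ (Ici 0)) (htop : Tendsto φ atTop atTop) (hK : Convex ℝ K)
    (hL : Convex ℝ L) {ρ : ℝ} (hρ : 0 < ρ) (hρK : ball 0 ρ ⊆ K) (hρL : ball 0 ρ ⊆ L) {R : ℝ}
    (hR : 0 < R) {x₀ : E} (hx₀L : gauge L x₀ ≤ R) (hx₀K : 1 ≤ gauge K x₀) {c : ℝ} (hc : 1 < c) :
    ∃ B > 0, ∃ᶠ t in atTop, B * exp (-(c * φ (R * t))) ≤ (μ ((t • K)ᶜ)).toReal := by
  set d := Module.finrank ℝ E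
  set ε := (c - 1) / (d + 1)
  have hε : 0 < ε := div_pos (by linarith) (by positivity)
  have hc_eq : c = 1 + ε + d * ε := by simp only [ε]; field_simp; ring
  set V := (ν (ball 0 1)).toReal
  have hV : 0 < V := ENNReal.toReal_pos (measure_ball_pos ν 0 one_pos).ne' measure_ball_lt_top.ne
  refine ⟨ρ ^ d * V, by positivity, ?_⟩
  have hgood : ∃ᶠ t in atTop,
      φ (R * t + (R + 1) * exp (-(ε * φ (R * t)))) ≤ (1 + ε) * φ (R * t) :=
    (tendsto_id.atTop_div_const hR).frequently
      ((hmono.frequently_le_one_add_mul htop (by linarith : (0:ℝ) < R + 1) hε).mono fun s hs => by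
        rwa [id, mul_div_cancel₀ _ hR.ne'])
  refine (hgood.and_eventually (eventually_ge_atTop 0)).mono fun t ⟨hφt, ht⟩ => ?_
  set δ := exp (-(ε * φ (R * t)))
  -- the ball of radius `ρδ` has volume `∝ δ^d = e^{-dεφ(Rt)}`, whence the choice `c = 1 + ε + dε`
  have hball := ofReal_exp_neg_mul_le_measure_compl_smul hμ hmono hK hL hρ hρK hρL hx₀L hx₀K ht
    (exp_pos (-(ε * φ (R * t)))).le
  rw [ν.addHaar_ball 0 (by positivity), ← mul_assoc,
    ← ENNReal.ofReal_toReal (measure_ball_lt_top (μ := ν) (x := 0) (r := 1)).ne,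
    ← ENNReal.ofReal_mul (by positivity), ← ENNReal.ofReal_mul (by positivity),
    ENNReal.ofReal_le_iff_le_toReal (measure_ne_top _ _)] at hball
  refine le_trans ?_ hball
  have hδd : (ρ * δ) ^ d = ρ ^ d * exp (-(d * ε * φ (R * t))) := by
    rw [mul_pow, ← exp_nat_mul]; ring_nf
  calc ρ ^ d * V * exp (-(c * φ (R * t)))
      ≤ ρ ^ d * V * (exp (-φ (R * t + (R + 1) * δ)) * exp (-(d * ε * φ (R * t)))) := by
        rw [← exp_add]
        gcongr
        rw [hc_eq]
        nlinarith
    _ = exp (-φ (R * t + (R + 1) * δ)) * (ρ * δ) ^ d * V := by rw [hδd]; ring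

end GaugeDensity

theorem stmt_9_general {n : ℕ} (hn : 1 ≤ n)
    (K L : Set (EuclideanSpace ℝ (Fin n)))
    (hKcomp : IsCompact K) (hKconv : Convex ℝ K)
    (hK0 : (0 : EuclideanSpace ℝ (Fin n)) ∈ interior K)
    (hLcomp : IsCompact L) (hLconv : Convex ℝ L)
    (hL0 : (0 : EuclideanSpace ℝ (Fin n)) ∈ interior L)
    (φ : ℝ → ℝ)
    (hφmono : MonotoneOn φ (Ici 0))
    (hφconv : ConvexOn ℝ (Ici 0) φ)
    (hφnonconst : ∃ a ∈ Ici (0:ℝ), ∃ b ∈ Ici (0:ℝ), φ a ≠ φ b)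
    (μ : Measure (EuclideanSpace ℝ (Fin n)))
    (hμ : μ = MeasureTheory.volume.withDensity
      (fun x => ENNReal.ofReal (Real.exp (-φ (gauge L x))))) :
    limsup (fun t : ℝ =>
        Real.log (μ ((t • K)ᶜ)).toReal / φ (inradiusOf K L * t)) atTop = -1 := by
  have : Nonempty (Fin n) := ⟨⟨0, hn⟩⟩
  have hK₀ := mem_interior_iff_mem_nhds.1 hK0
  have hL₀ := mem_interior_iff_mem_nhds.1 hL0
  obtain ⟨ρ, hρ, hρKL⟩ := Metric.mem_nhds_iff.1 (inter_mem hK₀ hL₀)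
  have hρK : ball 0 ρ ⊆ K := hρKL.trans inter_subset_left
  have hρL : ball 0 ρ ⊆ L := hρKL.trans inter_subset_right
  obtain ⟨s₀, hs₀, hφs₀⟩ := hφmono.exists_pos_lt_of_ne hφnonconst
  obtain ⟨a, ha, b, hlin⟩ := hφconv.exists_linear_lower_bound hφmono hs₀ hφs₀
  have hφtop := tendsto_atTop_of_linear_lower_bound ha hlin
  have hr := inradiusOf_pos hKcomp hKconv hK₀ hLcomp hL₀
  obtain ⟨x₀, hx₀L, hx₀K⟩ := exists_gauge_le_inradiusOf_gauge_eq_one hKcomp hKconv hK₀ hLcomp hL₀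
  have : IsFiniteMeasure μ := hμ ▸ isFiniteMeasure_withDensity_ofReal
    (hasFiniteIntegral_exp_neg_comp_gauge volume hLcomp.isBounded hL₀ ha hlin)
  refine limsup_log_div_eq_neg_one (hφtop.comp (tendsto_id.const_mul_atTop hr)) ?_
    (fun c hc => ?_) fun c hc => ?_
  · filter_upwards [eventually_ge_atTop 0] with t ht
    exact ENNReal.toReal_pos (measure_compl_smul_pos hμ hφmono hKconv hLconv hρ hρK hρL hx₀L
      hx₀K.ge ht).ne' (measure_ne_top _ _)
  · exact eventually_toReal_measure_compl_smul_le hμ hφmono ha hlin hLconv hLcomp.isBounded hL₀ hr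
      (inradiusOf_smul_subset hKcomp hKconv hK₀ hLcomp hL₀) hc
  · exact frequently_le_toReal_measure_compl_smul hμ hφmono hφtop hKconv hLconv hρ hρK hρL hr
      hx₀L hx₀K.ge hc

theorem stmt_9 {n : ℕ} (hn : 1 ≤ n)
    (K L : Set (EuclideanSpace ℝ (Fin n)))
    (hKcomp : IsCompact K) (hKconv : Convex ℝ K)
    (hK0 : (0 : EuclideanSpace ℝ (Fin n)) ∈ interior K)
    (hLcomp : IsCompact L) (hLconv : Convex ℝ L)
    (hL0 : (0 : EuclideanSpace ℝ (Fin n)) ∈ interior L)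
    (φ : ℝ → ℝ)
    (hφmono : MonotoneOn φ (Ici 0))
    (hφconv : ConvexOn ℝ (Ici 0) φ)
    (hφnonneg : ∀ x ∈ Ici (0:ℝ), 0 ≤ φ x)
    (hφnonconst : ∃ a ∈ Ici (0:ℝ), ∃ b ∈ Ici (0:ℝ), φ a ≠ φ b)
    (μ : Measure (EuclideanSpace ℝ (Fin n)))
    (hμ : μ = MeasureTheory.volume.withDensity
      (fun x => ENNReal.ofReal (Real.exp (-φ (gauge L x))))) :
    limsup (fun t : ℝ =>
        Real.log (μ ((t • K)ᶜ)).toReal / φ (inradiusOf K L * t)) atTop = -1 :=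
  stmt_9_general hn K L hKcomp hKconv hK0 hLcomp hLconv hL0 φ hφmono hφconv hφnonconst μ hμ
end

section
/- Let n ≥ 1, let K, L ⊂ ℝⁿ be convex bodies containing the origin in their interiors, let φ : [0,∞) → [0,∞) be an increasing, non-constant, convex function, and let μ be the measure on ℝⁿ with density x ↦ exp(−φ(‖x‖_L)) with respect to Lebesgue measure. If there exists t₀ > 0 such that μ(tL; B₂ⁿ) ≥ μ(tK; B₂ⁿ) for all t ≥ t₀ (i.e. the weighted outer Minkowski content of tL dominates that of tK for all sufficiently large t), then L ⊆ K. Here B₂ⁿ is the closed Euclidean unit ball. -/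
/-!
If some `x₀ ∈ L` lies outside `K`, then for some `c < 1` the cone `A = {x | ‖x‖_L ≤ c ‖x‖_K}`
meets `K` in a set of positive volume. With `B` the closed unit ball and `K ⊆ R B`, the set
`tK + εB` contains `(t + ε/R) K`, so `(tK + εB) \ tK` contains the shell
`(t + ε/R)(K ∩ A) \ t(K ∩ A)`, of volume of order `ε t^(n-1)`, on which the density is at least
`exp (-φ (c' t))` for any `c < c' < 1` once `ε` is small. Dually, with `ρ B ⊆ L`, the set
`tL + εB` lies in `(t + ε/ρ) L`, and outside `tL` the density is at most `exp (-φ t)`. Hence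
`exp (-φ (c' t)) t^(n-1) ≲ μ(tK; B) ≤ μ(tL; B) ≲ exp (-φ t) t^(n-1)`, so `φ t - φ (c' t)` stays
bounded, whereas convexity makes it grow at least linearly in `t`.
-/

open MeasureTheory Filter Set Pointwise
open Topology Metric Module
open scoped ENNReal

/-- The mixed measure `μ(K; M) = liminf_{ε→0⁺} (μ(K + εM) − μ(K))/ε`. -/
noncomputable def mixedMeasure {n : ℕ}
    (μ : Measure (EuclideanSpace ℝ (Fin n)))
    (K M : Set (EuclideanSpace ℝ (Fin n))) : ℝ :=
  Filter.liminf
    (fun ε : ℝ => ((μ (K + ε • M)).toReal - (μ K).toReal) / ε)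
    (nhdsWithin 0 (Set.Ioi 0))

lemma sub_mul_pow_le_pow_sub_pow {s t : ℝ} (ht : 0 ≤ t) (hts : t ≤ s) {n : ℕ} (hn : 1 ≤ n) :
    (s - t) * t ^ (n - 1) ≤ s ^ n - t ^ n := by
  obtain ⟨m, rfl⟩ := Nat.exists_eq_add_of_le' hn
  have hpow := pow_le_pow_left₀ ht hts m
  rw [Nat.add_sub_cancel, pow_succ, pow_succ]
  nlinarith

lemma pow_add_sub_pow_le {t a : ℝ} (ht : 0 ≤ t) (ha : 0 ≤ a) (n : ℕ) :
    (t + a) ^ n - t ^ n ≤ a * n * (t + a) ^ (n - 1) := by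
  have h := abs_pow_sub_pow_le (t + a) t n
  rw [add_sub_cancel_left, abs_of_nonneg ha, abs_of_nonneg (add_nonneg ht ha), abs_of_nonneg ht,
    max_eq_left (le_add_of_nonneg_right ha)] at h
  exact (le_abs_self _).trans h

theorem tendsto_sub_comp_const_mul_atTop {φ : ℝ → ℝ} (hmono : MonotoneOn φ (Ici 0))
    (hconv : ConvexOn ℝ (Ici 0) φ) (hφ : ∃ a ∈ Ici (0 : ℝ), ∃ b ∈ Ici (0 : ℝ), φ a ≠ φ b)
    {c : ℝ} (hc₀ : 0 < c) (hc₁ : c < 1) :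
    Tendsto (fun t => φ t - φ (c * t)) atTop atTop := by
  obtain ⟨a, b, ha, hab, hφab⟩ : ∃ a b, 0 ≤ a ∧ a < b ∧ φ a < φ b := by
    obtain ⟨a, ha, b, hb, hne⟩ := hφ
    rcases hne.lt_or_gt with h | h
    · exact ⟨a, b, ha, lt_of_not_ge fun hba => (hmono hb ha hba).not_gt h, h⟩
    · exact ⟨b, a, hb, lt_of_not_ge fun hab => (hmono ha hb hab).not_gt h, h⟩
  set m := (φ b - φ a) / (b - a)
  have hm : 0 < m := div_pos (sub_pos.2 hφab) (sub_pos.2 hab)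
  refine tendsto_atTop_mono' _ ?_ (tendsto_id.const_mul_atTop (by nlinarith : 0 < m * (1 - c)))
  filter_upwards [eventually_gt_atTop (b / c)] with t hbt
  have hbct : b < c * t := by rwa [div_lt_iff₀' hc₀] at hbt
  have hct : c * t < t := by nlinarith
  -- the secant slope of `φ` on `[c t, t]` dominates its slope `m` on `[a, b]`
  have hslope := (hconv.slope_mono_adjacent ha (mem_Ici.2 (by linarith)) hab hbct).trans
    (hconv.slope_mono_adjacent (z := t) (mem_Ici.2 (by linarith)) (mem_Ici.2 (by linarith))
      hbct hct)
  have := (le_div_iff₀ (sub_pos.2 hct)).1 hslope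
  simp only [id]
  linarith

lemma sub_le_div_of_exp_neg_mul_le {a b P Q : ℝ} (hP : 0 < P)
    (h : Real.exp (-a) * P ≤ Real.exp (-b) * Q) : b - a ≤ Q / P := by
  have hexp : Real.exp (b - a) * P ≤ Q := by
    have := mul_le_mul_of_nonneg_left h (Real.exp_pos b).le
    rwa [← mul_assoc, ← mul_assoc, ← Real.exp_add, ← Real.exp_add, add_neg_cancel, Real.exp_zero,
      one_mul, ← sub_eq_add_neg] at this
  rw [le_div_iff₀ hP]
  nlinarith [Real.add_one_le_exp (b - a)]

section MinkowskiSum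

variable {E : Type*} [NormedAddCommGroup E] [NormedSpace ℝ E]

lemma Convex.smul_subset_smul_of_le {K : Set E} (hK : Convex ℝ K) (h0 : (0 : E) ∈ K) {s t : ℝ}
    (ht : 0 ≤ t) (hts : t ≤ s) : t • K ⊆ s • K := by
  calc t • K ⊆ t • K + (s - t) • K := subset_add_left _ (zero_mem_smul_set h0)
    _ = s • K := by rw [← hK.add_smul ht (sub_nonneg.2 hts), add_sub_cancel]

lemma smul_closedBall_one_eq {ρ ε : ℝ} (hρ : 0 < ρ) (hε : 0 ≤ ε) :
    ε • closedBall (0 : E) 1 = (ε / ρ) • closedBall (0 : E) ρ := by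
  rw [_root_.smul_closedBall _ _ zero_le_one, _root_.smul_closedBall _ _ hρ.le, smul_zero,
    smul_zero, Real.norm_of_nonneg hε, Real.norm_of_nonneg (by positivity),
    div_mul_cancel₀ _ hρ.ne', mul_one]

lemma smul_add_smul_closedBall_subset {M : Set E} (hM : Convex ℝ M) {ρ : ℝ} (hρ : 0 < ρ)
    (hball : closedBall (0 : E) ρ ⊆ M) {t ε : ℝ} (ht : 0 ≤ t) (hε : 0 ≤ ε) :
    t • M + ε • closedBall (0 : E) 1 ⊆ (t + ε / ρ) • M := by
  rw [hM.add_smul ht (by positivity), smul_closedBall_one_eq hρ hε]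
  exact add_subset_add_left (smul_set_mono hball)

lemma smul_subset_smul_add_smul_closedBall {K : Set E} (hK : Convex ℝ K) {R : ℝ} (hR : 0 < R)
    (hKR : K ⊆ closedBall (0 : E) R) {t ε : ℝ} (ht : 0 ≤ t) (hε : 0 ≤ ε) :
    (t + ε / R) • K ⊆ t • K + ε • closedBall (0 : E) 1 := by
  rw [hK.add_smul ht (by positivity), smul_closedBall_one_eq hR hε]
  exact add_subset_add_left (smul_set_mono hKR)

end MinkowskiSum

section GaugeCone

variable {E : Type*} [NormedAddCommGroup E] [NormedSpace ℝ E]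

lemma smul_setOf_gauge_le_mul_gauge (K L : Set E) (c : ℝ) {s : ℝ} (hs : 0 < s) :
    s • {x | gauge L x ≤ c * gauge K x} = {x | gauge L x ≤ c * gauge K x} := by
  ext x
  simp only [mem_smul_set_iff_inv_smul_mem₀ hs.ne', mem_ofPred_eq,
    gauge_smul_of_nonneg (inv_nonneg.2 hs.le), smul_eq_mul]
  rw [mul_left_comm, mul_le_mul_iff_right₀ (inv_pos.2 hs)]

lemma measure_inter_setOf_gauge_le_pos [MeasurableSpace E] (ν : Measure E) [ν.IsOpenPosMeasure]
    {K L : Set E} (hK : Convex ℝ K) (hK0 : K ∈ 𝓝 0) (hL : Convex ℝ L) (hL0 : L ∈ 𝓝 0) {c : ℝ}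
    {x₀ : E} (hx₀ : gauge L x₀ < c * gauge K x₀) :
    0 < ν (K ∩ {x | gauge L x ≤ c * gauge K x}) := by
  have hgK := continuous_gauge hK hK0
  have hgL := continuous_gauge hL hL0
  have hU : IsOpen {x | gauge K x < 1 ∧ gauge L x < c * gauge K x} :=
    (isOpen_lt hgK continuous_const).inter (isOpen_lt hgL (continuous_const.mul hgK))
  have hUsub : {x | gauge K x < 1 ∧ gauge L x < c * gauge K x} ⊆
      K ∩ {x | gauge L x ≤ c * gauge K x} := fun x hx =>
    ⟨setOfPred_gauge_lt_one_subset_self hK (mem_of_mem_nhds hK0) (absorbent_nhds_zero hK0) hx.1,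
      hx.2.le⟩
  have hg : 0 < gauge K x₀ := (gauge_nonneg _).lt_of_ne fun h => by
    rw [← h, mul_zero] at hx₀
    exact (gauge_nonneg _).not_gt hx₀
  set r := (2 * gauge K x₀)⁻¹
  have hr : 0 < r := by positivity
  refine (hU.measure_pos ν ⟨r • x₀, ?_⟩).trans_le (measure_mono hUsub)
  simp only [mem_ofPred_eq, gauge_smul_of_nonneg hr.le, smul_eq_mul]
  refine ⟨?_, by nlinarith⟩
  simp only [r]
  field_simp
  norm_num

lemma exists_lt_one_measure_inter_setOf_gauge_le_pos [MeasurableSpace E] (ν : Measure E)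
    [ν.IsOpenPosMeasure] {K L : Set E} (hKc : IsCompact K) (hK : Convex ℝ K) (hK0 : K ∈ 𝓝 0)
    (hL : Convex ℝ L) (hL0 : L ∈ 𝓝 0) {x₀ : E} (hx₀L : x₀ ∈ L) (hx₀K : x₀ ∉ K) :
    ∃ c, 0 < c ∧ c < 1 ∧ 0 < ν (K ∩ {x | gauge L x ≤ c * gauge K x}) := by
  have hgK : 1 < gauge K x₀ := lt_of_not_ge fun h => hx₀K <| by
    simpa [hKc.isClosed.closure_eq] using (gauge_le_one_iff_mem_closure hK hK0).1 h
  obtain ⟨c, hgc, hc1⟩ := exists_between (inv_lt_one_of_one_lt₀ hgK)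
  refine ⟨c, (inv_pos.2 (one_pos.trans hgK)).trans hgc, hc1,
    measure_inter_setOf_gauge_le_pos ν hK hK0 hL hL0 (x₀ := x₀) ?_⟩
  exact (gauge_le_one_of_mem hx₀L).trans_lt ((inv_lt_iff_one_lt_mul₀ (one_pos.trans hgK)).1 hgc)

end GaugeCone

section WithDensity

variable {α : Type*} [MeasurableSpace α] {ν : Measure α} {f : α → ℝ≥0∞} {s : Set α} {r : ℝ}

lemma measureReal_withDensity_le (hs : MeasurableSet s) (hνs : ν s ≠ ∞) (hr : 0 ≤ r)
    (hf : ∀ x ∈ s, f x ≤ ENNReal.ofReal r) : (ν.withDensity f).real s ≤ r * ν.real s := by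
  have h : ν.withDensity f s ≤ ENNReal.ofReal r * ν s := by
    rw [withDensity_apply _ hs, ← setLIntegral_const]
    exact setLIntegral_mono' hs hf
  calc (ν.withDensity f).real s ≤ (ENNReal.ofReal r * ν s).toReal :=
        ENNReal.toReal_mono (by finiteness) h
    _ = r * ν.real s := by rw [ENNReal.toReal_mul, ENNReal.toReal_ofReal hr, measureReal_def]

lemma le_measureReal_withDensity (hs : MeasurableSet s) (hμs : ν.withDensity f s ≠ ∞)
    (hr : 0 ≤ r) (hf : ∀ x ∈ s, ENNReal.ofReal r ≤ f x) :
    r * ν.real s ≤ (ν.withDensity f).real s := by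
  have h : ENNReal.ofReal r * ν s ≤ ν.withDensity f s := by
    rw [withDensity_apply _ hs, ← setLIntegral_const]
    exact setLIntegral_mono' hs hf
  calc r * ν.real s = (ENNReal.ofReal r * ν s).toReal := by
        rw [ENNReal.toReal_mul, ENNReal.toReal_ofReal hr, measureReal_def]
    _ ≤ (ν.withDensity f).real s := ENNReal.toReal_mono hμs h

lemma isFiniteMeasureOnCompacts_withDensity_of_le [TopologicalSpace α]
    [IsFiniteMeasureOnCompacts ν] {b : ℝ≥0∞} (hb : b ≠ ∞) (hf : ∀ x, f x ≤ b) :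
    IsFiniteMeasureOnCompacts (ν.withDensity f) := by
  refine ⟨fun K hK => (withDensity_mono (ae_of_all _ hf) K).trans_lt ?_⟩
  rw [withDensity_const, Measure.smul_apply, smul_eq_mul]
  exact ENNReal.mul_lt_top hb.lt_top hK.measure_lt_top

end WithDensity

section HaarShell

variable {E : Type*} [NormedAddCommGroup E] [NormedSpace ℝ E] [FiniteDimensional ℝ E]
  [MeasurableSpace E] [BorelSpace E] (ν : Measure E) [ν.IsAddHaarMeasure]

lemma measureReal_smul_sdiff_smul {C : Set E} (hC : MeasurableSet C) (hCν : ν C ≠ ∞) {s t : ℝ}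
    (ht : 0 < t) (hts : t ≤ s) (hsub : t • C ⊆ s • C) :
    ν.real (s • C \ t • C) = (s ^ finrank ℝ E - t ^ finrank ℝ E) * ν.real C := by
  have hsmul : ∀ r : ℝ, 0 ≤ r → ν (r • C) = ENNReal.ofReal (r ^ finrank ℝ E) * ν C :=
    fun r hr => Measure.addHaar_smul_of_nonneg ν hr C
  have hsmulReal : ∀ r : ℝ, 0 ≤ r → ν.real (r • C) = r ^ finrank ℝ E * ν.real C := fun r hr => by
    rw [measureReal_def, hsmul r hr, ENNReal.toReal_mul, ENNReal.toReal_ofReal (by positivity),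
      measureReal_def]
  rw [measureReal_sdiff hsub (hC.const_smul₀ t) (by rw [hsmul s (ht.le.trans hts)]; finiteness),
    hsmulReal s (ht.le.trans hts), hsmulReal t ht.le, sub_mul]

end HaarShell

section WeightedShell

variable {E : Type*} [NormedAddCommGroup E] [NormedSpace ℝ E] [FiniteDimensional ℝ E]
  [MeasurableSpace E] [BorelSpace E] {ν : Measure E} [ν.IsAddHaarMeasure] {f : E → ℝ≥0∞}
  [IsFiniteMeasureOnCompacts (ν.withDensity f)]

lemma measureReal_withDensity_smul_add_closedBall_sub_le {M : Set E} (hMc : IsCompact M)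
    (hM : Convex ℝ M) {ρ : ℝ} (hρ : 0 < ρ) (hball : closedBall (0 : E) ρ ⊆ M) {t ε r : ℝ}
    (ht : 0 < t) (hε : 0 ≤ ε) (hr : 0 ≤ r) (hf : ∀ x ∉ t • M, f x ≤ ENNReal.ofReal r) :
    (ν.withDensity f).real (t • M + ε • closedBall 0 1) - (ν.withDensity f).real (t • M)
      ≤ r * ((t + ε / ρ) ^ finrank ℝ E - t ^ finrank ℝ E) * ν.real M := by
  set s := t + ε / ρ
  have hts' : t ≤ s := le_add_of_nonneg_right (div_nonneg hε hρ.le)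
  have hts : t • M ⊆ s • M :=
    hM.smul_subset_smul_of_le (hball (mem_closedBall_self hρ.le)) ht.le hts'
  have hsM := (hMc.smul s).isClosed.measurableSet
  have htM := (hMc.smul t).isClosed.measurableSet
  calc (ν.withDensity f).real (t • M + ε • closedBall 0 1) - (ν.withDensity f).real (t • M)
      ≤ (ν.withDensity f).real (s • M) - (ν.withDensity f).real (t • M) :=
        sub_le_sub_right (measureReal_mono (smul_add_smul_closedBall_subset hM hρ hball ht.le hε)
          (hMc.smul s).measure_ne_top) _
    _ = (ν.withDensity f).real (s • M \ t • M) :=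
        (measureReal_sdiff hts htM (hMc.smul s).measure_ne_top).symm
    _ ≤ r * ν.real (s • M \ t • M) :=
        measureReal_withDensity_le (hsM.diff htM)
          (measure_ne_top_of_subset sdiff_subset (hMc.smul s).measure_ne_top) hr
          fun x hx => hf x hx.2
    _ = _ := by
        rw [measureReal_smul_sdiff_smul ν hMc.isClosed.measurableSet hMc.measure_ne_top ht hts' hts,
          mul_assoc]

lemma le_measureReal_withDensity_smul_add_closedBall_sub {K A : Set E} (hKc : IsCompact K)
    (hK : Convex ℝ K) (hK0 : (0 : E) ∈ K) {R : ℝ} (hR : 0 < R) (hKR : K ⊆ closedBall (0 : E) R)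
    (hAm : MeasurableSet A) (hA : ∀ s : ℝ, 0 < s → s • A = A) {t ε r : ℝ} (ht : 0 < t)
    (hε : 0 ≤ ε) (hr : 0 ≤ r) (hf : ∀ x ∈ (t + ε / R) • K ∩ A, ENNReal.ofReal r ≤ f x) :
    r * ((t + ε / R) ^ finrank ℝ E - t ^ finrank ℝ E) * ν.real (K ∩ A)
      ≤ (ν.withDensity f).real (t • K + ε • closedBall 0 1) - (ν.withDensity f).real (t • K) := by
  set s := t + ε / R
  have hts' : t ≤ s := le_add_of_nonneg_right (div_nonneg hε hR.le)
  have hs : 0 < s := ht.trans_le hts'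
  have hts : t • K ⊆ s • K := hK.smul_subset_smul_of_le hK0 ht.le hts'
  have hsmul_inter : ∀ u : ℝ, 0 < u → u • (K ∩ A) = u • K ∩ A := fun u hu => by
    rw [smul_set_inter₀ hu.ne', hA u hu]
  have hCm : MeasurableSet (K ∩ A) := hKc.isClosed.measurableSet.inter hAm
  have htK := (hKc.smul t).isClosed.measurableSet
  have hshell : s • (K ∩ A) \ t • (K ∩ A) ⊆ s • K \ t • K := by
    rw [hsmul_inter s hs, hsmul_inter t ht]
    rintro x ⟨⟨hxs, hxA⟩, hxt⟩
    exact ⟨hxs, fun hxt' => hxt ⟨hxt', hxA⟩⟩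
  have hsub : t • (K ∩ A) ⊆ s • (K ∩ A) := by
    rw [hsmul_inter s hs, hsmul_inter t ht]
    exact inter_subset_inter_left _ hts
  calc r * (s ^ finrank ℝ E - t ^ finrank ℝ E) * ν.real (K ∩ A)
      = r * ν.real (s • (K ∩ A) \ t • (K ∩ A)) := by
        rw [mul_assoc, measureReal_smul_sdiff_smul ν hCm
          (measure_ne_top_of_subset inter_subset_left hKc.measure_ne_top) ht hts' hsub]
    _ ≤ (ν.withDensity f).real (s • (K ∩ A) \ t • (K ∩ A)) :=
        le_measureReal_withDensity ((hCm.const_smul₀ s).diff (hCm.const_smul₀ t))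
          (measure_ne_top_of_subset (hshell.trans sdiff_subset) (hKc.smul s).measure_ne_top) hr
          fun x hx => hf x (by rw [← hsmul_inter s hs]; exact hx.1)
    _ ≤ (ν.withDensity f).real (s • K \ t • K) :=
        measureReal_mono hshell (measure_ne_top_of_subset sdiff_subset (hKc.smul s).measure_ne_top)
    _ = (ν.withDensity f).real (s • K) - (ν.withDensity f).real (t • K) :=
        measureReal_sdiff hts htK (hKc.smul s).measure_ne_top
    _ ≤ _ := sub_le_sub_right (measureReal_mono
        (smul_subset_smul_add_smul_closedBall hK hR hKR ht.le hε)
        ((hKc.smul t).add ((isCompact_closedBall _ _).smul ε)).measure_ne_top) _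

end WeightedShell

section MixedMeasure

variable {n : ℕ} {μ : Measure (EuclideanSpace ℝ (Fin n))} {K M : Set (EuclideanSpace ℝ (Fin n))}

lemma mixedMeasure_le_of_eventually {C : ℝ}
    (hmono : ∀ᶠ ε : ℝ in 𝓝[>] 0, μ.real K ≤ μ.real (K + ε • M))
    (hle : ∀ᶠ ε : ℝ in 𝓝[>] 0, μ.real (K + ε • M) - μ.real K ≤ C * ε) :
    mixedMeasure μ K M ≤ C := by
  refine liminf_le_of_frequently_le ?_ (isBoundedUnder_of_eventually_ge (a := 0) ?_)
  · refine ((hle.and self_mem_nhdsWithin).mono fun ε h => ?_).frequently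
    exact (div_le_iff₀ h.2).2 h.1
  · filter_upwards [hmono, self_mem_nhdsWithin] with ε h hε
    exact div_nonneg (sub_nonneg.2 h) (le_of_lt hε)

lemma le_mixedMeasure_of_eventually {c C : ℝ}
    (hle : ∀ᶠ ε : ℝ in 𝓝[>] 0, μ.real (K + ε • M) - μ.real K ≤ C * ε)
    (hge : ∀ᶠ ε : ℝ in 𝓝[>] 0, c * ε ≤ μ.real (K + ε • M) - μ.real K) :
    c ≤ mixedMeasure μ K M := by
  refine le_liminf_of_le (isCoboundedUnder_ge_of_eventually_le _ (x := C) ?_) ?_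
  · filter_upwards [hle, self_mem_nhdsWithin] with ε h hε
    exact (div_le_iff₀ hε).2 h
  · filter_upwards [hge, self_mem_nhdsWithin] with ε h hε
    exact (le_div_iff₀ hε).2 h

variable {f : EuclideanSpace ℝ (Fin n) → ℝ≥0∞} [IsFiniteMeasureOnCompacts (volume.withDensity f)]
  {t r : ℝ}

lemma eventually_measureReal_withDensity_smul_add_closedBall_sub_le (hMc : IsCompact M)
    (hM : Convex ℝ M) {ρ : ℝ} (hρ : 0 < ρ) (hball : closedBall 0 ρ ⊆ M) (ht : 0 < t) (hr : 0 ≤ r)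
    (hf : ∀ x ∉ t • M, f x ≤ ENNReal.ofReal r) :
    ∀ᶠ ε : ℝ in 𝓝[>] 0, (volume.withDensity f).real (t • M + ε • closedBall 0 1)
        - (volume.withDensity f).real (t • M)
      ≤ r * (n * (2 * t) ^ (n - 1) / ρ) * volume.real M * ε := by
  filter_upwards [Ioc_mem_nhdsGT (mul_pos hρ ht)] with ε ⟨hε, hερ⟩
  have hshell := measureReal_withDensity_smul_add_closedBall_sub_le (ν := volume) hMc hM hρ hball
    ht hε.le hr hf
  rw [finrank_euclideanSpace_fin] at hshell
  have hpow : (t + ε / ρ) ^ n - t ^ n ≤ ε / ρ * n * (2 * t) ^ (n - 1) := by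
    refine (pow_add_sub_pow_le ht.le (by positivity) n).trans ?_
    gcongr
    linarith [(div_le_iff₀' hρ).2 hερ]
  calc _ ≤ _ := hshell
    _ ≤ r * (ε / ρ * n * (2 * t) ^ (n - 1)) * volume.real M := by gcongr
    _ = _ := by ring

lemma eventually_le_measureReal_withDensity_smul_add_closedBall_sub (hn : 1 ≤ n)
    {A : Set (EuclideanSpace ℝ (Fin n))} (hKc : IsCompact K) (hK : Convex ℝ K) (hK0 : 0 ∈ K)
    {R : ℝ} (hR : 0 < R) (hKR : K ⊆ closedBall 0 R) (hAm : MeasurableSet A)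
    (hA : ∀ s : ℝ, 0 < s → s • A = A) {δ : ℝ} (ht : 0 < t) (hδ : 0 < δ) (hr : 0 ≤ r)
    (hf : ∀ x ∈ (t + δ) • K ∩ A, ENNReal.ofReal r ≤ f x) :
    ∀ᶠ ε : ℝ in 𝓝[>] 0, r * (t ^ (n - 1) / R) * volume.real (K ∩ A) * ε
      ≤ (volume.withDensity f).real (t • K + ε • closedBall 0 1)
        - (volume.withDensity f).real (t • K) := by
  filter_upwards [Ioc_mem_nhdsGT (mul_pos hR hδ)] with ε ⟨hε, hεδ⟩
  have hεR : ε / R ≤ δ := (div_le_iff₀' hR).2 hεδ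
  have hshell := le_measureReal_withDensity_smul_add_closedBall_sub (ν := volume) hKc hK hK0 hR
    hKR hAm hA ht hε.le hr fun x hx =>
      hf x ⟨hK.smul_subset_smul_of_le hK0 (by positivity) (by linarith) hx.1, hx.2⟩
  rw [finrank_euclideanSpace_fin] at hshell
  have hpow := sub_mul_pow_le_pow_sub_pow ht.le
    (le_add_of_nonneg_right (by positivity : 0 ≤ ε / R)) hn
  rw [add_sub_cancel_left] at hpow
  refine le_trans ?_ hshell
  calc r * (t ^ (n - 1) / R) * volume.real (K ∩ A) * ε
      = r * (ε / R * t ^ (n - 1)) * volume.real (K ∩ A) := by ring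
    _ ≤ _ := by gcongr

theorem mixedMeasure_withDensity_smul_le (hMc : IsCompact M) (hM : Convex ℝ M) {ρ : ℝ}
    (hρ : 0 < ρ) (hball : closedBall 0 ρ ⊆ M) (ht : 0 < t) (hr : 0 ≤ r)
    (hf : ∀ x ∉ t • M, f x ≤ ENNReal.ofReal r) :
    mixedMeasure (volume.withDensity f) (t • M) (closedBall 0 1)
      ≤ r * (n * (2 * t) ^ (n - 1) / ρ) * volume.real M :=
  mixedMeasure_le_of_eventually
    (Eventually.of_forall fun ε : ℝ => measureReal_mono
      (subset_add_left _ (zero_mem_smul_set (mem_closedBall_self zero_le_one)))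
      (((hMc.smul t).add ((isCompact_closedBall 0 1).smul ε)).measure_ne_top
        (μ := volume.withDensity f)))
    (eventually_measureReal_withDensity_smul_add_closedBall_sub_le hMc hM hρ hball ht hr hf)

theorem le_mixedMeasure_withDensity_smul (hn : 1 ≤ n) {A : Set (EuclideanSpace ℝ (Fin n))}
    (hKc : IsCompact K) (hK : Convex ℝ K) (hK0 : K ∈ 𝓝 0) {R : ℝ} (hR : 0 < R)
    (hKR : K ⊆ closedBall 0 R) (hAm : MeasurableSet A) (hA : ∀ s : ℝ, 0 < s → s • A = A)
    {δ : ℝ} (ht : 0 < t) (hδ : 0 < δ) (hr : 0 ≤ r)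
    (hf : ∀ x ∈ (t + δ) • K ∩ A, ENNReal.ofReal r ≤ f x) {r' : ℝ} (hr' : 0 ≤ r')
    (hf' : ∀ x ∉ t • K, f x ≤ ENNReal.ofReal r') :
    r * (t ^ (n - 1) / R) * volume.real (K ∩ A)
      ≤ mixedMeasure (volume.withDensity f) (t • K) (closedBall 0 1) := by
  obtain ⟨ρ, hρ, hball⟩ := nhds_basis_closedBall.mem_iff.1 hK0
  exact le_mixedMeasure_of_eventually
    (eventually_measureReal_withDensity_smul_add_closedBall_sub_le hKc hK hρ hball ht hr' hf')
    (eventually_le_measureReal_withDensity_smul_add_closedBall_sub hn hKc hK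
      (mem_of_mem_nhds hK0) hR hKR hAm hA ht hδ hr hf)

end MixedMeasure

section GaugeDensity

variable {n : ℕ} {K L : Set (EuclideanSpace ℝ (Fin n))} {φ : ℝ → ℝ} {t : ℝ}

lemma ofReal_exp_neg_comp_le_of_le (hφ : MonotoneOn φ (Ici 0)) {a b : ℝ} (ha : 0 ≤ a)
    (hab : a ≤ b) :
    ENNReal.ofReal (Real.exp (-φ b)) ≤ ENNReal.ofReal (Real.exp (-φ a)) :=
  ENNReal.ofReal_le_ofReal (Real.exp_le_exp.2 (neg_le_neg (hφ ha (ha.trans hab) hab)))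

lemma isFiniteMeasureOnCompacts_withDensity_gauge (hφ : MonotoneOn φ (Ici 0)) :
    IsFiniteMeasureOnCompacts
      (volume.withDensity fun x => ENNReal.ofReal (Real.exp (-φ (gauge L x)))) :=
  isFiniteMeasureOnCompacts_withDensity_of_le ENNReal.ofReal_ne_top
    fun x => ofReal_exp_neg_comp_le_of_le hφ le_rfl (gauge_nonneg x)

theorem mixedMeasure_withDensity_gauge_smul_le (hLc : IsCompact L) (hL : Convex ℝ L)
    (hL0 : L ∈ 𝓝 0) (hφ : MonotoneOn φ (Ici 0)) {ρ : ℝ} (hρ : 0 < ρ)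
    (hball : closedBall 0 ρ ⊆ L) (ht : 0 < t) :
    mixedMeasure (volume.withDensity fun x => ENNReal.ofReal (Real.exp (-φ (gauge L x))))
        (t • L) (closedBall 0 1)
      ≤ Real.exp (-φ t) * (n * (2 * t) ^ (n - 1) / ρ) * volume.real L := by
  have := isFiniteMeasureOnCompacts_withDensity_gauge (L := L) hφ
  refine mixedMeasure_withDensity_smul_le hLc hL hρ hball ht (Real.exp_pos _).le fun x hx => ?_
  exact ofReal_exp_neg_comp_le_of_le hφ ht.le
    (le_gauge_of_notMem (hL.starConvex (mem_of_mem_nhds hL0)) (absorbent_nhds_zero hL0).absorbs hx)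

theorem le_mixedMeasure_withDensity_gauge_smul (hn : 1 ≤ n) (hKc : IsCompact K)
    (hK : Convex ℝ K) (hK0 : K ∈ 𝓝 0) (hL : Convex ℝ L) (hL0 : L ∈ 𝓝 0)
    (hφ : MonotoneOn φ (Ici 0)) {R : ℝ} (hR : 0 < R) (hKR : K ⊆ closedBall 0 R) {c c' : ℝ}
    (hc : 0 < c) (hcc' : c < c') (ht : 0 < t) :
    Real.exp (-φ (c' * t)) * (t ^ (n - 1) / R) * volume.real (K ∩ {x | gauge L x ≤ c * gauge K x})
      ≤ mixedMeasure (volume.withDensity fun x => ENNReal.ofReal (Real.exp (-φ (gauge L x))))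
        (t • K) (closedBall 0 1) := by
  have := isFiniteMeasureOnCompacts_withDensity_gauge (L := L) hφ
  have hAm : MeasurableSet {x | gauge L x ≤ c * gauge K x} := (isClosed_le
    (continuous_gauge hL hL0) (continuous_const.mul (continuous_gauge hK hK0))).measurableSet
  refine le_mixedMeasure_withDensity_smul hn hKc hK hK0 hR hKR hAm
    (fun s hs => smul_setOf_gauge_le_mul_gauge K L c hs) ht (δ := (c' - c) / c * t)
    (by have := sub_pos.2 hcc'; positivity) (Real.exp_pos _).le
    (fun x hx => ofReal_exp_neg_comp_le_of_le hφ (gauge_nonneg _) ?_) (Real.exp_pos _).le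
    fun x _ => ofReal_exp_neg_comp_le_of_le hφ le_rfl (gauge_nonneg _)
  calc gauge L x ≤ c * gauge K x := hx.2
    _ ≤ c * (t + (c' - c) / c * t) := by
      gcongr
      exact gauge_le_of_mem (by have := sub_pos.2 hcc'; positivity) hx.1
    _ = c' * t := by field_simp; ring

end GaugeDensity

theorem stmt_11_general {n : ℕ} (hn : 1 ≤ n)
    (K L : Set (EuclideanSpace ℝ (Fin n)))
    (hKcomp : IsCompact K) (hKconv : Convex ℝ K)
    (hK0 : (0 : EuclideanSpace ℝ (Fin n)) ∈ interior K)
    (hLcomp : IsCompact L) (hLconv : Convex ℝ L)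
    (hL0 : (0 : EuclideanSpace ℝ (Fin n)) ∈ interior L)
    (φ : ℝ → ℝ)
    (hφmono : MonotoneOn φ (Ici 0))
    (hφconv : ConvexOn ℝ (Ici 0) φ)
    (hφnonconst : ∃ a ∈ Ici (0:ℝ), ∃ b ∈ Ici (0:ℝ), φ a ≠ φ b)
    (μ : Measure (EuclideanSpace ℝ (Fin n)))
    (hμ : μ = MeasureTheory.volume.withDensity
      (fun x => ENNReal.ofReal (Real.exp (-φ (gauge L x)))))
    (t₀ : ℝ)
    (hdom : ∀ t : ℝ, t₀ ≤ t →
      mixedMeasure μ (t • K) (Metric.closedBall 0 1)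
        ≤ mixedMeasure μ (t • L) (Metric.closedBall 0 1)) :
    L ⊆ K := by
  intro x₀ hx₀L
  by_contra hx₀K
  subst hμ
  rw [mem_interior_iff_mem_nhds] at hK0 hL0
  obtain ⟨c, hc, hc1, hV⟩ :=
    exists_lt_one_measure_inter_setOf_gauge_le_pos volume hKcomp hKconv hK0 hLconv hL0 hx₀L hx₀K
  obtain ⟨c', hcc', hc'1⟩ := exists_between hc1
  obtain ⟨ρ, hρ, hball⟩ := nhds_basis_closedBall.mem_iff.1 hL0
  obtain ⟨R, hR, hKR⟩ := hKcomp.isBounded.subset_closedBall_lt 0 0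
  set P := volume.real (K ∩ {x | gauge L x ≤ c * gauge K x}) / R
  set Q := n * 2 ^ (n - 1) / ρ * volume.real L
  have hP : 0 < P := div_pos (ENNReal.toReal_pos hV.ne'
    (measure_ne_top_of_subset inter_subset_left hKcomp.measure_ne_top)) hR
  have hbound : ∀ t, max t₀ 1 ≤ t → φ t - φ (c' * t) ≤ Q / P := by
    intro t ht
    have ht0 : 0 < t := one_pos.trans_le (le_of_max_le_right ht)
    refine sub_le_div_of_exp_neg_mul_le hP (le_of_mul_le_mul_right ?_ (pow_pos ht0 (n - 1)))
    calc Real.exp (-φ (c' * t)) * P * t ^ (n - 1)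
        = Real.exp (-φ (c' * t)) * (t ^ (n - 1) / R)
            * volume.real (K ∩ {x | gauge L x ≤ c * gauge K x}) := by ring
      _ ≤ _ := le_mixedMeasure_withDensity_gauge_smul hn hKcomp hKconv hK0 hLconv hL0 hφmono hR
          hKR hc hcc' ht0
      _ ≤ _ := hdom t (le_of_max_le_left ht)
      _ ≤ _ := mixedMeasure_withDensity_gauge_smul_le hLcomp hLconv hL0 hφmono hρ hball ht0
      _ = Real.exp (-φ t) * Q * t ^ (n - 1) := by rw [mul_pow]; ring
  obtain ⟨t, ht, hbig⟩ := ((eventually_ge_atTop (max t₀ 1)).and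
    ((tendsto_sub_comp_const_mul_atTop hφmono hφconv hφnonconst (hc.trans hcc')
      hc'1).eventually_gt_atTop (Q / P))).exists
  exact (hbig.trans_le (hbound t ht)).false

theorem stmt_11 {n : ℕ} (hn : 1 ≤ n)
    (K L : Set (EuclideanSpace ℝ (Fin n)))
    (hKcomp : IsCompact K) (hKconv : Convex ℝ K)
    (hK0 : (0 : EuclideanSpace ℝ (Fin n)) ∈ interior K)
    (hLcomp : IsCompact L) (hLconv : Convex ℝ L)
    (hL0 : (0 : EuclideanSpace ℝ (Fin n)) ∈ interior L)
    (φ : ℝ → ℝ)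
    (hφmono : MonotoneOn φ (Ici 0))
    (hφconv : ConvexOn ℝ (Ici 0) φ)
    (hφnonneg : ∀ x ∈ Ici (0:ℝ), 0 ≤ φ x)
    (hφnonconst : ∃ a ∈ Ici (0:ℝ), ∃ b ∈ Ici (0:ℝ), φ a ≠ φ b)
    (μ : Measure (EuclideanSpace ℝ (Fin n)))
    (hμ : μ = MeasureTheory.volume.withDensity
      (fun x => ENNReal.ofReal (Real.exp (-φ (gauge L x)))))
    (t₀ : ℝ) (ht₀ : 0 < t₀)
    (hdom : ∀ t : ℝ, t₀ ≤ t →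
      mixedMeasure μ (t • K) (Metric.closedBall 0 1)
        ≤ mixedMeasure μ (t • L) (Metric.closedBall 0 1)) :
    L ⊆ K :=
  stmt_11_general hn K L hKcomp hKconv hK0 hLcomp hLconv hL0 φ hφmono hφconv hφnonconst μ hμ t₀ hdom
end

section
/- Let h_A, h_B, h_C : ℝ → ℝ be 2π-periodic, twice continuously differentiable functions with h_A, h_B, h_C strictly positive and f_A(θ) := h_A(θ) + h_A″(θ) strictly positive for all θ. For t > 0 define I(t) = (1/2π) ∫₀^{2π} exp(−t²(h_A(θ)² + h_A′(θ)²)/2) · [ h_B(θ)h_C(θ)(1 − t² h_A(θ) f_A(θ)) − h_B′(θ)h_C′(θ) ] dθ. Then I(t) < 0 for all sufficiently large t, and lim_{t→∞} ln(−I(t)) / (t²/2) = −min_{θ∈[0,2π]} ( h_A(θ)² + h_A′(θ)² ). -/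
open Filter Set Real

private lemma aux_periodic_deriv (f : ℝ → ℝ) (c : ℝ) (hp : Function.Periodic f c) :
    Function.Periodic (deriv f) c := by
  intro x
  have : deriv (fun y => f (y + c)) x = deriv f (x + c) := by
    simpa using deriv_comp_add_const f c x
  rw [← this]
  congr 1
  ext y; exact hp y

private lemma aux_per_min {φ : ℝ → ℝ} (hc : Continuous φ) (hp : Function.Periodic φ (2 * π)) :
    ∃ θ₀ ∈ Icc 0 (2 * π), ∀ θ : ℝ, φ θ₀ ≤ φ θ := by
  obtain ⟨θ₀, hθ₀, hmin⟩ := isCompact_Icc.exists_isMinOn (s := Icc 0 (2 * π))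
    (nonempty_Icc.mpr (by positivity)) hc.continuousOn
  refine ⟨θ₀, hθ₀, fun θ => ?_⟩
  obtain ⟨y, hy, hyeq⟩ := hp.exists_mem_Ico₀ (by positivity) θ
  rw [hyeq]
  exact hmin (Ico_subset_Icc_self hy)

private lemma aux_per_max {φ : ℝ → ℝ} (hc : Continuous φ) (hp : Function.Periodic φ (2 * π)) :
    ∃ M : ℝ, ∀ θ : ℝ, φ θ ≤ M := by
  obtain ⟨θ₀, _, h⟩ := aux_per_min (φ := fun x => -φ x) hc.neg (by intro x; simp [hp x])
  exact ⟨φ θ₀, fun θ => by have := h θ; simp at this; linarith⟩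

private lemma aux_log_tendsto (K : ℝ) (hK : 0 < K) :
    Tendsto (fun t : ℝ => log (K * t ^ 2) / (t ^ 2 / 2)) atTop (nhds 0) := by
  have h1 : Tendsto (fun u : ℝ => log (2 * K * u) / u) atTop (nhds 0) := by
    have hlog : Tendsto (fun u : ℝ => log u / u) atTop (nhds 0) := by
      have := Real.tendsto_pow_log_div_mul_add_atTop 1 0 1 one_ne_zero
      simpa using this
    have hconst : Tendsto (fun u : ℝ => log (2 * K) / u) atTop (nhds 0) :=
      tendsto_const_nhds.div_atTop tendsto_id
    have := hconst.add hlog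
    rw [add_zero] at this
    refine this.congr' ?_
    filter_upwards [eventually_gt_atTop 0] with u hu
    rw [← add_div, ← Real.log_mul (by positivity) (by positivity)]
  have h2 : Tendsto (fun t : ℝ => t ^ 2 / 2) atTop atTop :=
    (tendsto_pow_atTop two_ne_zero).atTop_div_const two_pos
  refine (h1.comp h2).congr' ?_
  filter_upwards [eventually_gt_atTop 0] with t ht
  simp only [Function.comp]
  congr 2
  ring

private lemma aux_exp_low (g : ℝ → ℝ) (hgc : Continuous g) (m θm : ℝ)
    (hθm : θm ∈ Icc 0 (2*π)) (hgm : g θm = m) (ε : ℝ) (hε : 0 < ε) :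
    ∃ δL > 0, ∀ t : ℝ,
      δL * Real.exp (-(t^2 * (m + ε)/2)) ≤ ∫ θ in (0:ℝ)..(2*π), Real.exp (-(t^2 * g θ/2)) := by
  obtain ⟨δ, hδ, hball⟩ := Metric.continuousAt_iff.mp hgc.continuousAt ε hε
  set a := max 0 (θm - δ/2) with ha
  set b := min (2*π) (θm + δ/2) with hb
  have hπ := Real.pi_pos
  obtain ⟨hm0, hm2⟩ := hθm
  have hab : a < b := by
    refine max_lt (lt_min (by positivity) (by linarith)) (lt_min (by linarith) (by linarith))
  have ha0 : 0 ≤ a := le_max_left _ _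
  have hb2 : b ≤ 2*π := min_le_left _ _
  refine ⟨b - a, by linarith, fun t => ?_⟩
  have hint : ∀ (u v : ℝ), IntervalIntegrable (fun θ => Real.exp (-(t^2 * g θ/2))) MeasureTheory.volume u v :=
    fun u v => (Real.continuous_exp.comp (by fun_prop)).intervalIntegrable u v
  have hsplit : ∫ θ in (0:ℝ)..(2*π), Real.exp (-(t^2 * g θ/2)) =
      (∫ θ in (0:ℝ)..a, Real.exp (-(t^2 * g θ/2))) + (∫ θ in a..b, Real.exp (-(t^2 * g θ/2)))
      + ∫ θ in b..(2*π), Real.exp (-(t^2 * g θ/2)) := by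
    rw [intervalIntegral.integral_add_adjacent_intervals (hint 0 a) (hint a b),
      intervalIntegral.integral_add_adjacent_intervals (hint 0 b) (hint b (2*π))]
  have h1 : 0 ≤ ∫ θ in (0:ℝ)..a, Real.exp (-(t^2 * g θ/2)) :=
    intervalIntegral.integral_nonneg ha0 (fun x _ => (Real.exp_pos _).le)
  have h3 : 0 ≤ ∫ θ in b..(2*π), Real.exp (-(t^2 * g θ/2)) :=
    intervalIntegral.integral_nonneg hb2 (fun x _ => (Real.exp_pos _).le)
  have h2 : (b - a) * Real.exp (-(t^2 * (m + ε)/2)) ≤ ∫ θ in a..b, Real.exp (-(t^2 * g θ/2)) := by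
    have := intervalIntegral.integral_mono_on (f := fun _ => Real.exp (-(t^2 * (m + ε)/2)))
      (g := fun θ => Real.exp (-(t^2 * g θ/2))) hab.le (intervalIntegrable_const) (hint a b) ?_
    · simpa using this
    · intro x hx
      apply Real.exp_le_exp.mpr
      have hgx : g x < m + ε := by
        have hd : dist x θm < δ := by
          rw [Real.dist_eq, abs_lt]
          have h1' : θm - δ/2 ≤ a := le_max_right _ _
          have h2' : b ≤ θm + δ/2 := min_le_right _ _
          obtain ⟨hxa, hxb⟩ := hx
          constructor <;> linarith
        have := hball hd
        rw [Real.dist_eq, abs_lt] at this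
        linarith [this.1, this.2, hgm]
      nlinarith [sq_nonneg t]
  linarith

private lemma aux_core (g p q : ℝ → ℝ) (hgc : Continuous g) (hpc : Continuous p)
    (hqc : Continuous q)
    (hgper : Function.Periodic g (2 * π)) (hpper : Function.Periodic p (2 * π))
    (hqper : Function.Periodic q (2 * π))
    (hgpos : ∀ θ, 0 < g θ) (hppos : ∀ θ, 0 < p θ)
    (J : ℝ → ℝ)
    (hJ : ∀ t : ℝ, 0 < t → J t = (1 / (2 * π)) * ∫ θ in (0:ℝ)..(2 * π),
      Real.exp (-(t ^ 2 * g θ / 2)) * (t ^ 2 * p θ - q θ)) :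
    (∀ᶠ t in atTop, 0 < J t) ∧
    Tendsto (fun t : ℝ => Real.log (J t) / (t ^ 2 / 2)) atTop
      (nhds (-sInf (g '' Icc 0 (2 * π)))) := by
  have hπ := Real.pi_pos
  -- bounds for p and q
  obtain ⟨cp, hcp, hplow⟩ : ∃ cp : ℝ, 0 < cp ∧ ∀ θ, cp ≤ p θ := by
    obtain ⟨θp, _, h⟩ := aux_per_min hpc hpper
    exact ⟨p θp, hppos θp, h⟩
  obtain ⟨Cp, hCp⟩ := aux_per_max hpc hpper
  have hCppos : 0 < Cp := lt_of_lt_of_le (hppos 0) (hCp 0)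
  obtain ⟨Mq, hMq⟩ := aux_per_max (φ := fun θ => |q θ|) hqc.abs (fun x => by simp [hqper x])
  have hMq0 : 0 ≤ Mq := le_trans (abs_nonneg _) (hMq 0)
  -- minimum of g
  obtain ⟨m, θm, hθm, hgm, hgmin, hsInf⟩ : ∃ m θm, θm ∈ Icc 0 (2 * π) ∧ g θm = m ∧
      (∀ θ, m ≤ g θ) ∧ sInf (g '' Icc 0 (2 * π)) = m := by
    obtain ⟨θm, hθm, h⟩ := aux_per_min hgc hgper
    refine ⟨g θm, θm, hθm, rfl, h, IsLeast.csInf_eq ⟨mem_image_of_mem _ hθm, ?_⟩⟩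
    rintro y ⟨x, -, rfl⟩; exact h x
  have hmpos : 0 < m := hgm ▸ hgpos θm
  -- exponential integral facts
  have hEcont : ∀ t : ℝ, Continuous (fun θ => Real.exp (-(t ^ 2 * g θ / 2))) := by
    intro t; fun_prop
  have hEup : ∀ t : ℝ, (∫ θ in (0:ℝ)..(2 * π), Real.exp (-(t ^ 2 * g θ / 2))) ≤
      2 * π * Real.exp (-(t ^ 2 * m / 2)) := by
    intro t
    have hmono := intervalIntegral.integral_mono_on (μ := MeasureTheory.volume)
      (a := (0:ℝ)) (b := 2 * π)
      (f := fun θ => Real.exp (-(t ^ 2 * g θ / 2)))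
      (g := fun _ => Real.exp (-(t ^ 2 * m / 2)))
      (by positivity) ((hEcont t).intervalIntegrable _ _) intervalIntegrable_const ?_
    · simpa using hmono
    · intro x _
      apply Real.exp_le_exp.mpr
      nlinarith [sq_nonneg t, hgmin x]
  have hElow : ∀ ε > 0, ∃ δL > 0, ∀ t : ℝ,
      δL * Real.exp (-(t ^ 2 * (m + ε) / 2)) ≤
        ∫ θ in (0:ℝ)..(2 * π), Real.exp (-(t ^ 2 * g θ / 2)) := by
    intro ε hε
    obtain ⟨δL, hδL, hlow⟩ := aux_exp_low g hgc m θm hθm hgm ε hε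
    exact ⟨δL, hδL, fun t => by simpa using hlow t⟩
  -- threshold
  obtain ⟨t0, ht01, hT⟩ : ∃ t0 : ℝ, 1 ≤ t0 ∧ ∀ t : ℝ, t0 ≤ t → Mq ≤ t ^ 2 * cp / 2 := by
    refine ⟨max 1 (Real.sqrt (2 * Mq / cp)), le_max_left _ _, fun t ht => ?_⟩
    have hs : Real.sqrt (2 * Mq / cp) ≤ t := le_trans (le_max_right _ _) ht
    have hs0 : (0:ℝ) ≤ Real.sqrt (2 * Mq / cp) := Real.sqrt_nonneg _
    have h2 : Real.sqrt (2 * Mq / cp) ^ 2 ≤ t ^ 2 := by nlinarith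
    rw [Real.sq_sqrt (by positivity)] at h2
    rw [div_le_iff₀ hcp] at h2
    linarith
  -- main integral bounds
  have hmain_low : ∀ t : ℝ, t0 ≤ t →
      (1 / (2 * π)) * (t ^ 2 * cp / 2 * ∫ θ in (0:ℝ)..(2 * π),
        Real.exp (-(t ^ 2 * g θ / 2))) ≤ J t := by
    intro t ht
    have htpos : 0 < t := lt_of_lt_of_le one_pos (le_trans ht01 ht)
    rw [hJ t htpos]
    have hmono := intervalIntegral.integral_mono_on (μ := MeasureTheory.volume)
      (a := (0:ℝ)) (b := 2 * π)
      (f := fun θ => t ^ 2 * cp / 2 * Real.exp (-(t ^ 2 * g θ / 2)))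
      (g := fun θ => Real.exp (-(t ^ 2 * g θ / 2)) * (t ^ 2 * p θ - q θ))
      (by positivity) ((continuous_const.mul (hEcont t)).intervalIntegrable _ _)
      (((hEcont t).mul (by fun_prop)).intervalIntegrable _ _) ?_
    · rw [intervalIntegral.integral_const_mul] at hmono
      exact mul_le_mul_of_nonneg_left hmono (by positivity)
    · intro x _
      have hq1 : q x ≤ Mq := le_trans (le_abs_self _) (hMq x)
      have hp1 : t ^ 2 * cp ≤ t ^ 2 * p x :=
        mul_le_mul_of_nonneg_left (hplow x) (sq_nonneg t)
      have hMqt := hT t ht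
      have hbr : t ^ 2 * cp / 2 ≤ t ^ 2 * p x - q x := by linarith
      calc t ^ 2 * cp / 2 * Real.exp (-(t ^ 2 * g x / 2))
          = Real.exp (-(t ^ 2 * g x / 2)) * (t ^ 2 * cp / 2) := by ring
        _ ≤ Real.exp (-(t ^ 2 * g x / 2)) * (t ^ 2 * p x - q x) :=
            mul_le_mul_of_nonneg_left hbr (Real.exp_pos _).le
  have hmain_up : ∀ t : ℝ, t0 ≤ t →
      J t ≤ (1 / (2 * π)) * ((Cp + Mq) * t ^ 2 * ∫ θ in (0:ℝ)..(2 * π),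
        Real.exp (-(t ^ 2 * g θ / 2))) := by
    intro t ht
    have ht1 : (1:ℝ) ≤ t := le_trans ht01 ht
    have htpos : 0 < t := lt_of_lt_of_le one_pos ht1
    rw [hJ t htpos]
    have hmono := intervalIntegral.integral_mono_on (μ := MeasureTheory.volume)
      (a := (0:ℝ)) (b := 2 * π)
      (f := fun θ => Real.exp (-(t ^ 2 * g θ / 2)) * (t ^ 2 * p θ - q θ))
      (g := fun θ => (Cp + Mq) * t ^ 2 * Real.exp (-(t ^ 2 * g θ / 2)))
      (by positivity)
      (((hEcont t).mul (by fun_prop)).intervalIntegrable _ _)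
      ((continuous_const.mul (hEcont t)).intervalIntegrable _ _) ?_
    · rw [intervalIntegral.integral_const_mul] at hmono
      exact mul_le_mul_of_nonneg_left hmono (by positivity)
    · intro x _
      have hq1 : -Mq ≤ q x := neg_le_of_abs_le (hMq x)
      have hp1 : t ^ 2 * p x ≤ t ^ 2 * Cp :=
        mul_le_mul_of_nonneg_left (hCp x) (sq_nonneg t)
      have ht2 : (1:ℝ) ≤ t ^ 2 := by nlinarith
      have hMt : Mq ≤ t ^ 2 * Mq := le_mul_of_one_le_left hMq0 ht2
      have hbr : t ^ 2 * p x - q x ≤ (Cp + Mq) * t ^ 2 := by nlinarith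
      calc Real.exp (-(t ^ 2 * g x / 2)) * (t ^ 2 * p x - q x)
          ≤ Real.exp (-(t ^ 2 * g x / 2)) * ((Cp + Mq) * t ^ 2) :=
            mul_le_mul_of_nonneg_left hbr (Real.exp_pos _).le
        _ = (Cp + Mq) * t ^ 2 * Real.exp (-(t ^ 2 * g x / 2)) := by ring
  -- positivity of the exponential integral
  obtain ⟨δ1, hδ1, hE1⟩ := hElow 1 one_pos
  have hEintpos : ∀ t : ℝ, 0 < ∫ θ in (0:ℝ)..(2 * π), Real.exp (-(t ^ 2 * g θ / 2)) :=
    fun t => lt_of_lt_of_le (by positivity) (hE1 t)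
  have hJpos : ∀ t : ℝ, t0 ≤ t → 0 < J t := by
    intro t ht
    have ht1 : (1:ℝ) ≤ t := le_trans ht01 ht
    have htpos : 0 < t := lt_of_lt_of_le one_pos ht1
    refine lt_of_lt_of_le ?_ (hmain_low t ht)
    have := hEintpos t
    positivity
  refine ⟨?_, ?_⟩
  · filter_upwards [eventually_ge_atTop t0] with t ht
    exact hJpos t ht
  · rw [hsInf, tendsto_order]
    constructor
    · -- lower bound direction
      intro b' hb'
      have hε : 0 < (-m - b') / 2 := by linarith
      obtain ⟨δL, hδL, hlowE⟩ := hElow ((-m - b') / 2) hε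
      have hK : 0 < cp * δL / (4 * π) := by positivity
      have hb2 : b' < -(m + (-m - b') / 2) := by linarith
      have hcorr := (aux_log_tendsto _ hK).sub_const (m + (-m - b') / 2)
      rw [zero_sub] at hcorr
      have hev : ∀ᶠ t : ℝ in atTop,
          b' < log (cp * δL / (4 * π) * t ^ 2) / (t ^ 2 / 2) - (m + (-m - b') / 2) :=
        hcorr.eventually (eventually_gt_nhds hb2)
      filter_upwards [hev, eventually_ge_atTop t0] with t hevt ht
      refine lt_of_lt_of_le hevt ?_
      have ht1 : (1:ℝ) ≤ t := le_trans ht01 ht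
      have htpos : 0 < t := lt_of_lt_of_le one_pos ht1
      have hlowI : cp * δL / (4 * π) * t ^ 2 *
          Real.exp (-(t ^ 2 * (m + (-m - b') / 2) / 2)) ≤ J t := by
        have h1 : (1 / (2 * π)) * (t ^ 2 * cp / 2 *
            (δL * Real.exp (-(t ^ 2 * (m + (-m - b') / 2) / 2)))) ≤
            (1 / (2 * π)) * (t ^ 2 * cp / 2 * ∫ θ in (0:ℝ)..(2 * π),
              Real.exp (-(t ^ 2 * g θ / 2))) := by
          refine mul_le_mul_of_nonneg_left ?_ (by positivity)
          exact mul_le_mul_of_nonneg_left (hlowE t) (by positivity)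
        have heq : (1 / (2 * π)) * (t ^ 2 * cp / 2 *
            (δL * Real.exp (-(t ^ 2 * (m + (-m - b') / 2) / 2)))) =
            cp * δL / (4 * π) * t ^ 2 *
              Real.exp (-(t ^ 2 * (m + (-m - b') / 2) / 2)) := by
          field_simp <;> ring
        rw [heq] at h1
        exact le_trans h1 (hmain_low t ht)
      have hJp := hJpos t ht
      have hlog : log (cp * δL / (4 * π) * t ^ 2) - t ^ 2 * (m + (-m - b') / 2) / 2 ≤
          log (J t) := by
        have h1 : log (cp * δL / (4 * π) * t ^ 2 *
            Real.exp (-(t ^ 2 * (m + (-m - b') / 2) / 2))) ≤ log (J t) :=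
          Real.log_le_log (by positivity) hlowI
        rw [Real.log_mul (by positivity) (Real.exp_ne_zero _), Real.log_exp] at h1
        linarith
      have ht2 : (0:ℝ) < t ^ 2 / 2 := by positivity
      have heq2 : (log (cp * δL / (4 * π) * t ^ 2) - t ^ 2 * (m + (-m - b') / 2) / 2) /
          (t ^ 2 / 2) = log (cp * δL / (4 * π) * t ^ 2) / (t ^ 2 / 2) -
            (m + (-m - b') / 2) := by
        field_simp <;> ring
      calc log (cp * δL / (4 * π) * t ^ 2) / (t ^ 2 / 2) - (m + (-m - b') / 2)
          = (log (cp * δL / (4 * π) * t ^ 2) - t ^ 2 * (m + (-m - b') / 2) / 2) /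
            (t ^ 2 / 2) := heq2.symm
        _ ≤ log (J t) / (t ^ 2 / 2) := by gcongr
    · -- upper bound direction
      intro b' hb'
      have hKu : 0 < Cp + Mq := by linarith
      have hcorr := (aux_log_tendsto _ hKu).sub_const m
      rw [zero_sub] at hcorr
      have hev : ∀ᶠ t : ℝ in atTop, log ((Cp + Mq) * t ^ 2) / (t ^ 2 / 2) - m < b' :=
        hcorr.eventually (eventually_lt_nhds hb')
      filter_upwards [hev, eventually_ge_atTop t0] with t hevt ht
      refine lt_of_le_of_lt ?_ hevt
      have ht1 : (1:ℝ) ≤ t := le_trans ht01 ht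
      have htpos : 0 < t := lt_of_lt_of_le one_pos ht1
      have hupI : J t ≤ (Cp + Mq) * t ^ 2 * Real.exp (-(t ^ 2 * m / 2)) := by
        have h2 : (1 / (2 * π)) * ((Cp + Mq) * t ^ 2 * ∫ θ in (0:ℝ)..(2 * π),
            Real.exp (-(t ^ 2 * g θ / 2))) ≤
            (1 / (2 * π)) * ((Cp + Mq) * t ^ 2 * (2 * π * Real.exp (-(t ^ 2 * m / 2)))) := by
          refine mul_le_mul_of_nonneg_left ?_ (by positivity)
          exact mul_le_mul_of_nonneg_left (hEup t) (by positivity)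
        have heq : (1 / (2 * π)) * ((Cp + Mq) * t ^ 2 *
            (2 * π * Real.exp (-(t ^ 2 * m / 2)))) =
            (Cp + Mq) * t ^ 2 * Real.exp (-(t ^ 2 * m / 2)) := by
          field_simp <;> ring
        rw [heq] at h2
        exact le_trans (hmain_up t ht) h2
      have hJp := hJpos t ht
      have hlog : log (J t) ≤ log ((Cp + Mq) * t ^ 2) - t ^ 2 * m / 2 := by
        have h1 : log (J t) ≤ log ((Cp + Mq) * t ^ 2 * Real.exp (-(t ^ 2 * m / 2))) :=
          Real.log_le_log hJp hupI
        rw [Real.log_mul (by positivity) (Real.exp_ne_zero _), Real.log_exp] at h1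
        linarith
      have ht2 : (0:ℝ) < t ^ 2 / 2 := by positivity
      have heq2 : (log ((Cp + Mq) * t ^ 2) - t ^ 2 * m / 2) / (t ^ 2 / 2) =
          log ((Cp + Mq) * t ^ 2) / (t ^ 2 / 2) - m := by
        field_simp <;> ring
      calc log (J t) / (t ^ 2 / 2)
          ≤ (log ((Cp + Mq) * t ^ 2) - t ^ 2 * m / 2) / (t ^ 2 / 2) := by gcongr
        _ = log ((Cp + Mq) * t ^ 2) / (t ^ 2 / 2) - m := heq2

theorem stmt_12 (hA hB hC : ℝ → ℝ)
    (hA2 : ContDiff ℝ 2 hA) (hB2 : ContDiff ℝ 2 hB) (hC2 : ContDiff ℝ 2 hC)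
    (hAper : Function.Periodic hA (2 * π))
    (hBper : Function.Periodic hB (2 * π))
    (hCper : Function.Periodic hC (2 * π))
    (hApos : ∀ θ, 0 < hA θ) (hBpos : ∀ θ, 0 < hB θ) (hCpos : ∀ θ, 0 < hC θ)
    (fA : ℝ → ℝ) (hfA : ∀ θ, fA θ = hA θ + deriv (deriv hA) θ)
    (hfApos : ∀ θ, 0 < fA θ)
    (I : ℝ → ℝ)
    (hI : ∀ t : ℝ, 0 < t →
      I t = (1 / (2 * π)) * ∫ θ in (0:ℝ)..(2 * π),
        Real.exp (-(t ^ 2 * (hA θ ^ 2 + (deriv hA θ) ^ 2) / 2)) *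
          (hB θ * hC θ * (1 - t ^ 2 * hA θ * fA θ) - deriv hB θ * deriv hC θ)) :
    (∀ᶠ t in atTop, I t < 0) ∧
    Tendsto (fun t : ℝ => Real.log (-I t) / (t ^ 2 / 2)) atTop
      (nhds (-sInf ((fun θ => hA θ ^ 2 + (deriv hA θ) ^ 2) '' Icc 0 (2 * π)))) := by
  have hAc : Continuous hA := hA2.continuous
  have hBc : Continuous hB := hB2.continuous
  have hCc : Continuous hC := hC2.continuous
  have hdAc : Continuous (deriv hA) := hA2.continuous_deriv one_le_two
  have hdBc : Continuous (deriv hB) := hB2.continuous_deriv one_le_two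
  have hdCc : Continuous (deriv hC) := hC2.continuous_deriv one_le_two
  have hddAc : Continuous (deriv (deriv hA)) := by
    have h1 := (contDiff_succ_iff_deriv (n := 1)).mp (by exact_mod_cast hA2)
    exact h1.2.2.continuous_deriv le_rfl
  have hfAeq : fA = fun θ => hA θ + deriv (deriv hA) θ := funext hfA
  have hfAc : Continuous fA := by rw [hfAeq]; exact hAc.add hddAc
  have hdAper := aux_periodic_deriv hA _ hAper
  have hdBper := aux_periodic_deriv hB _ hBper
  have hdCper := aux_periodic_deriv hC _ hCper
  have hddAper := aux_periodic_deriv (deriv hA) _ hdAper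
  have hfAper : Function.Periodic fA (2 * π) := fun x => by
    rw [hfA, hfA, hAper x, hddAper x]
  have hcore := aux_core (fun θ => hA θ ^ 2 + (deriv hA θ) ^ 2)
    (fun θ => hA θ * fA θ * (hB θ * hC θ))
    (fun θ => hB θ * hC θ - deriv hB θ * deriv hC θ)
    (by fun_prop) (by fun_prop) (by fun_prop)
    (fun x => by simp only [hAper x, hdAper x])
    (fun x => by simp only [hAper x, hBper x, hCper x, hfAper x])
    (fun x => by simp only [hBper x, hCper x, hdBper x, hdCper x])
    (fun θ => by have := hApos θ; positivity)
    (fun θ => by have := hApos θ; have := hfApos θ; have := hBpos θ; have := hCpos θ; positivity)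
    (fun t => -I t)
    (by
      intro t ht
      beta_reduce
      rw [hI t ht, ← mul_neg, ← intervalIntegral.integral_neg]
      congr 1
      apply intervalIntegral.integral_congr
      intro θ _
      simp only
      ring)
  refine ⟨?_, hcore.2⟩
  filter_upwards [hcore.1] with t ht
  linarith
end

section
/- Let L ⊂ ℝ² be a convex body containing the origin in its interior whose gauge function g(x) = ‖x‖_L is differentiable on ℝ² \ {0}. Let h : ℝ → ℝ be a 2π-periodic, twice continuously differentiable, strictly positive function with h(θ) + h″(θ) > 0 for all θ, and define x(θ) = h(θ)u(θ) + h′(θ)u′(θ), where u(θ) = (cos θ, sin θ) and u′(θ) = (−sin θ, cos θ). If θ₀ ∈ [0, 2π] is a minimizer of θ ↦ g(x(θ)), then ⟨∇g(x(θ₀)), u(θ₀)⟩ = g(x(θ₀)) / h(θ₀) > 0. -/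
/-!
By periodicity, a minimiser `θ₀` of `θ ↦ g(x(θ))` on `[0, 2π]` is a local minimiser, so the
derivative `(h + h″)(θ₀) ⟨∇g(x(θ₀)), u′(θ₀)⟩` vanishes; as `h + h″ > 0`, `∇g(x(θ₀)) ⊥ u′(θ₀)`.
Since `x = h u + h′ u′`, Euler's identity then gives
`g(x(θ₀)) = ⟨∇g(x(θ₀)), x(θ₀)⟩ = h(θ₀) ⟨∇g(x(θ₀)), u(θ₀)⟩`. Positivity holds because the gauge
of a bounded absorbent set vanishes only at `0`, while `⟨x, u⟩ = h > 0` forces `x ≠ 0`.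
-/

open Filter Set Real
open scoped RealInnerProductSpace

/-- The unit vector `u(θ) = (cos θ, sin θ)` in the Euclidean plane. -/
noncomputable def uvec (θ : ℝ) : EuclideanSpace ℝ (Fin 2) :=
  (WithLp.equiv 2 (Fin 2 → ℝ)).symm ![Real.cos θ, Real.sin θ]

/-- The unit vector `u′(θ) = (−sin θ, cos θ)` in the Euclidean plane. -/
noncomputable def uvec' (θ : ℝ) : EuclideanSpace ℝ (Fin 2) :=
  (WithLp.equiv 2 (Fin 2 → ℝ)).symm ![-Real.sin θ, Real.cos θ]

theorem Function.Periodic.deriv {𝕜 F : Type*} [NontriviallyNormedField 𝕜] [NormedAddCommGroup F]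
    [NormedSpace 𝕜 F] {f : 𝕜 → F} {c : 𝕜} (hf : Function.Periodic f c) :
    Function.Periodic (deriv f) c := fun t => by
  rw [← deriv_comp_add_const]
  exact congrArg (fun φ => _root_.deriv φ t) (funext hf)

theorem Function.Periodic.isMinOn_univ {α β : Type*} [AddCommGroup α] [LinearOrder α]
    [IsOrderedAddMonoid α] [Archimedean α] [Preorder β] {f : α → β} {T a : α}
    (hf : Function.Periodic f T) (hT : 0 < T) (hmin : IsMinOn f (Icc 0 T) a) : IsMinOn f univ a := fun t _ => by
  obtain ⟨t', ht', hft⟩ := hf.exists_mem_Ico₀ hT t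
  show f a ≤ f t
  rw [hft]
  exact hmin ⟨ht'.1, ht'.2.le⟩

section Euler

variable {E : Type*} [NormedAddCommGroup E] [NormedSpace ℝ E]

theorem fderiv_apply_self_of_smul_nonneg {g : E → ℝ}
    (hhom : ∀ r : ℝ, 0 ≤ r → ∀ y, g (r • y) = r * g y) {y : E} (hg : DifferentiableAt ℝ g y) :
    fderiv ℝ g y y = g y := by
  have hray : HasDerivAt (fun r : ℝ => r • y) y 1 := by
    simpa using (hasDerivAt_id (1 : ℝ)).smul_const y
  have hchain : HasDerivAt (fun r : ℝ => g (r • y)) (fderiv ℝ g y y) 1 := by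
    have hg1 : HasFDerivAt g (fderiv ℝ g y) ((1 : ℝ) • y) := by
      rw [one_smul]
      exact hg.hasFDerivAt
    exact hg1.comp_hasDerivAt 1 hray
  have hlinear : HasDerivAt (fun r : ℝ => g (r • y)) (g y) 1 := by
    refine (hasDerivAt_mul_const (g y)).congr_of_eventuallyEq ?_
    filter_upwards [eventually_gt_nhds one_pos] with r hr
    exact hhom r hr.le y
  exact hchain.unique hlinear

theorem fderiv_gauge_apply_self {s : Set E} {y : E} (hg : DifferentiableAt ℝ (gauge s) y) :
    fderiv ℝ (gauge s) y y = gauge s y :=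
  fderiv_apply_self_of_smul_nonneg (fun _ hr _ => by rw [gauge_smul_of_nonneg hr, smul_eq_mul]) hg

end Euler

theorem hasDerivAt_uvec (θ : ℝ) : HasDerivAt uvec (uvec' θ) θ := by
  have hcoord : HasDerivAt (fun t => ![Real.cos t, Real.sin t] : ℝ → Fin 2 → ℝ)
      ![-Real.sin θ, Real.cos θ] θ := by
    rw [hasDerivAt_pi]
    intro i
    fin_cases i
    · simpa using Real.hasDerivAt_cos θ
    · simpa using Real.hasDerivAt_sin θ
  exact ((PiLp.continuousLinearEquiv 2 ℝ (fun _ : Fin 2 => ℝ)).symm :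
    (Fin 2 → ℝ) →L[ℝ] EuclideanSpace ℝ (Fin 2)).hasFDerivAt.comp_hasDerivAt θ hcoord

theorem hasDerivAt_uvec' (θ : ℝ) : HasDerivAt uvec' (-uvec θ) θ := by
  have hcoord : HasDerivAt (fun t => ![-Real.sin t, Real.cos t] : ℝ → Fin 2 → ℝ)
      ![-Real.cos θ, -Real.sin θ] θ := by
    rw [hasDerivAt_pi]
    intro i
    fin_cases i <;> simp
    · exact (Real.hasDerivAt_sin θ).neg
    · exact Real.hasDerivAt_cos θ
  have hval : -uvec θ = (WithLp.equiv 2 (Fin 2 → ℝ)).symm ![-Real.cos θ, -Real.sin θ] := by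
    ext i
    fin_cases i <;> simp [uvec]
  rw [hval]
  exact ((PiLp.continuousLinearEquiv 2 ℝ (fun _ : Fin 2 => ℝ)).symm :
    (Fin 2 → ℝ) →L[ℝ] EuclideanSpace ℝ (Fin 2)).hasFDerivAt.comp_hasDerivAt θ hcoord

theorem inner_uvec_self (θ : ℝ) : ⟪uvec θ, uvec θ⟫ = 1 := by
  rw [uvec, PiLp.inner_apply]
  simp [Fin.sum_univ_two]

theorem inner_uvec'_uvec (θ : ℝ) : ⟪uvec' θ, uvec θ⟫ = 0 := by
  simp [uvec, uvec', PiLp.inner_apply, Fin.sum_univ_two]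
  ring

theorem uvec_periodic : Function.Periodic uvec (2 * π) := fun θ => by
  simp only [uvec, Real.cos_add_two_pi, Real.sin_add_two_pi]

theorem uvec'_periodic : Function.Periodic uvec' (2 * π) := fun θ => by
  simp only [uvec', Real.cos_add_two_pi, Real.sin_add_two_pi]

/-- The boundary point with outer normal `u(θ)` of the convex body with support function `h`. -/
noncomputable def supportCurve (h : ℝ → ℝ) (θ : ℝ) : EuclideanSpace ℝ (Fin 2) :=
  h θ • uvec θ + deriv h θ • uvec' θ

section SupportCurve

variable {h : ℝ → ℝ}

theorem inner_supportCurve_uvec (θ : ℝ) : ⟪supportCurve h θ, uvec θ⟫ = h θ := by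
  simp only [supportCurve, inner_add_left, real_inner_smul_left, inner_uvec_self,
    inner_uvec'_uvec]
  ring

theorem supportCurve_ne_zero {θ : ℝ} (hθ : h θ ≠ 0) : supportCurve h θ ≠ 0 := fun h0 =>
  hθ (by rw [← inner_supportCurve_uvec (h := h) θ, h0, inner_zero_left])

theorem Function.Periodic.supportCurve (hper : Function.Periodic h (2 * π)) :
    Function.Periodic (supportCurve h) (2 * π) := fun θ => by
  simp only [_root_.supportCurve, hper θ, hper.deriv θ, uvec_periodic θ, uvec'_periodic θ]

theorem hasDerivAt_supportCurve {θ : ℝ} (h1 : DifferentiableAt ℝ h θ)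
    (h2 : DifferentiableAt ℝ (deriv h) θ) :
    HasDerivAt (supportCurve h) ((h θ + deriv (deriv h) θ) • uvec' θ) θ := by
  refine ((h1.hasDerivAt.smul (hasDerivAt_uvec θ)).add
    (h2.hasDerivAt.smul (hasDerivAt_uvec' θ))).congr_deriv ?_
  rw [smul_neg, add_smul]
  abel

theorem mul_fderiv_apply_uvec_of_isLocalMin {g : EuclideanSpace ℝ (Fin 2) → ℝ} {θ : ℝ}
    (h1 : DifferentiableAt ℝ h θ) (h2 : DifferentiableAt ℝ (deriv h) θ)
    (hcurv : h θ + deriv (deriv h) θ ≠ 0)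
    (hg : DifferentiableAt ℝ g (supportCurve h θ)) (hmin : IsLocalMin (g ∘ supportCurve h) θ) :
    h θ * fderiv ℝ g (supportCurve h θ) (uvec θ) =
      fderiv ℝ g (supportCurve h θ) (supportCurve h θ) := by
  have hcrit := hmin.hasDerivAt_eq_zero
    (hg.hasFDerivAt.comp_hasDerivAt θ (hasDerivAt_supportCurve h1 h2))
  rw [map_smul, smul_eq_mul, mul_eq_zero, or_iff_right hcurv] at hcrit
  calc h θ * fderiv ℝ g (supportCurve h θ) (uvec θ)
      = fderiv ℝ g (supportCurve h θ) (h θ • uvec θ + deriv h θ • uvec' θ) := by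
        rw [map_add, map_smul, map_smul, hcrit, smul_eq_mul, smul_zero, add_zero]
    _ = fderiv ℝ g (supportCurve h θ) (supportCurve h θ) := rfl

end SupportCurve

theorem stmt_15_general
    (L : Set (EuclideanSpace ℝ (Fin 2)))
    (hLcomp : IsCompact L)
    (hL0 : (0 : EuclideanSpace ℝ (Fin 2)) ∈ interior L)
    (hgdiff : ∀ x : EuclideanSpace ℝ (Fin 2), x ≠ 0 → DifferentiableAt ℝ (gauge L) x)
    (h : ℝ → ℝ) (h2 : ContDiff ℝ 2 h) (hper : Function.Periodic h (2 * π))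
    (hpos : ∀ θ, 0 < h θ) (hcurv : ∀ θ, 0 < h θ + deriv (deriv h) θ)
    (x : ℝ → EuclideanSpace ℝ (Fin 2))
    (hx : ∀ θ, x θ = h θ • uvec θ + deriv h θ • uvec' θ)
    (θ₀ : ℝ)
    (hmin : ∀ θ ∈ Icc 0 (2 * π), gauge L (x θ₀) ≤ gauge L (x θ)) :
    ⟪gradient (gauge L) (x θ₀), uvec θ₀⟫ = gauge L (x θ₀) / h θ₀ ∧
    0 < gauge L (x θ₀) / h θ₀ := by
  obtain rfl : x = supportCurve h := funext hx
  have hne := supportCurve_ne_zero (hpos θ₀).ne'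
  have hgd := hgdiff _ hne
  have hlocmin : IsLocalMin (gauge L ∘ supportCurve h) θ₀ :=
    ((hper.supportCurve.comp (gauge L)).isMinOn_univ two_pi_pos hmin).isLocalMin univ_mem
  have hmul := mul_fderiv_apply_uvec_of_isLocalMin
    (h2.differentiable two_ne_zero θ₀) ((h2.deriv' (n := 1)).differentiable one_ne_zero θ₀)
    (hcurv θ₀).ne' hgd hlocmin
  have habs : Absorbent ℝ L := absorbent_nhds_zero (mem_interior_iff_mem_nhds.mp hL0)
  have hgpos : 0 < gauge L (supportCurve h θ₀) :=
    (gauge_pos habs ((NormedSpace.isVonNBounded_iff ℝ).2 hLcomp.isBounded)).2 hne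
  refine ⟨?_, div_pos hgpos (hpos θ₀)⟩
  rw [inner_gradient_left, eq_div_iff (hpos θ₀).ne', mul_comm, hmul,
    fderiv_gauge_apply_self hgd]

theorem stmt_15
    (L : Set (EuclideanSpace ℝ (Fin 2)))
    (hLcomp : IsCompact L) (hLconv : Convex ℝ L)
    (hL0 : (0 : EuclideanSpace ℝ (Fin 2)) ∈ interior L)
    (hgdiff : ∀ x : EuclideanSpace ℝ (Fin 2), x ≠ 0 → DifferentiableAt ℝ (gauge L) x)
    (h : ℝ → ℝ) (h2 : ContDiff ℝ 2 h) (hper : Function.Periodic h (2 * π))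
    (hpos : ∀ θ, 0 < h θ) (hcurv : ∀ θ, 0 < h θ + deriv (deriv h) θ)
    (x : ℝ → EuclideanSpace ℝ (Fin 2))
    (hx : ∀ θ, x θ = h θ • uvec θ + deriv h θ • uvec' θ)
    (θ₀ : ℝ) (hθ₀ : θ₀ ∈ Icc 0 (2 * π))
    (hmin : ∀ θ ∈ Icc 0 (2 * π), gauge L (x θ₀) ≤ gauge L (x θ)) :
    ⟪gradient (gauge L) (x θ₀), uvec θ₀⟫ = gauge L (x θ₀) / h θ₀ ∧
    0 < gauge L (x θ₀) / h θ₀ :=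
  stmt_15_general L hLcomp hL0 hgdiff h h2 hper hpos hcurv x hx θ₀ hmin
end
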